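/- arXiv:0709.2608 — 7 statements merged into one kernel-verified Lean document; each statement's English description precedes it below -/
import Mathlib

section
/- Let n and i be natural numbers with 1 ≤ i < n such that i·(n−i) is even. Then 2^{⌊(n+1)/2⌋−1}·(⌊n/2⌋)! = 2·C(⌊n/2⌋, ⌊i/2⌋)·2^{⌊(i+1)/2⌋−1}·(⌊i/2⌋)!·2^{⌊(n−i+1)/2⌋−1}·(⌊(n−i)/2⌋)!, where C(a,b) denotes the binomial coefficient. -/
/-- For `1 ≤ i < n` with `i·(n−i)` even,
`2^{⌊(n+1)/2⌋−1}·⌊n/2⌋! =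
  2·C(⌊n/2⌋,⌊i/2⌋)·2^{⌊(i+1)/2⌋−1}·⌊i/2⌋!·2^{⌊(n−i+1)/2⌋−1}·⌊(n−i)/2⌋!`. -/
theorem weyl_order_AI (n i : ℕ) (h1 : 1 ≤ i) (h2 : i < n)
    (heven : Even (i * (n - i))) :
    2 ^ ((n + 1) / 2 - 1) * Nat.factorial (n / 2) =
      2 * Nat.choose (n / 2) (i / 2) *
        (2 ^ ((i + 1) / 2 - 1) * Nat.factorial (i / 2)) *
        (2 ^ ((n - i + 1) / 2 - 1) * Nat.factorial ((n - i) / 2)) := by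
  have hij : Even i ∨ Even (n - i) := by
    rcases Nat.even_mul.mp heven with h | h
    · exact Or.inl h
    · exact Or.inr h
  have ha : n / 2 = i / 2 + (n - i) / 2 := by
    rcases hij with ⟨k, hk⟩ | ⟨k, hk⟩ <;> omega
  have hb : (n + 1) / 2 - 1 = 1 + ((i + 1) / 2 - 1) + ((n - i + 1) / 2 - 1) := by
    rcases hij with ⟨k, hk⟩ | ⟨k, hk⟩ <;> omega
  have key : (i / 2 + (n - i) / 2).choose (i / 2) * Nat.factorial (i / 2) *
      Nat.factorial ((n - i) / 2) = Nat.factorial (i / 2 + (n - i) / 2) := by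
    have := Nat.choose_mul_factorial_mul_factorial
      (Nat.le_add_right (i / 2) ((n - i) / 2))
    simpa [Nat.add_sub_cancel_left] using this
  rw [ha, hb, pow_add, pow_add, ← key]
  ring
end

section
/- Let V be a real inner product space, let V₁ and V₂ be mutually orthogonal linear subspaces of V, and let R be a finite set of nonzero vectors with R ⊆ V₁ ∪ V₂. Set R₁ = R ∩ V₁ and R₂ = R ∩ V₂. Then the maximal cardinality of a strongly orthogonal subset of R equals the maximal cardinality of a strongly orthogonal subset of R₁ plus the maximal cardinality of a strongly orthogonal subset of R₂. -/
open RealInnerProductSpace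

/-- A subset `S` of a set `R` of vectors is *strongly orthogonal* (relative to
`R`) if `S ⊆ R` and for all distinct `α, β ∈ S` one has `α ≠ -β`,
`α + β ∉ R` and `α - β ∉ R`. -/
def IsStronglyOrthSubset {V : Type*} [AddCommGroup V] (R S : Set V) : Prop :=
  S ⊆ R ∧ S.Pairwise fun α β => α ≠ -β ∧ α + β ∉ R ∧ α - β ∉ R

/-- The maximal cardinality of a strongly orthogonal subset of `R`. -/
noncomputable def maxStronglyOrth {V : Type*} [AddCommGroup V] (R : Set V) : ℕ :=
  sSup {n : ℕ | ∃ S : Set V, IsStronglyOrthSubset R S ∧ S.ncard = n}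

/-- If `R` is a finite set of nonzero vectors contained in the
union of two mutually orthogonal subspaces `V₁, V₂`, then the maximal
cardinality of a strongly orthogonal subset of `R` is the sum of the maximal
cardinalities of strongly orthogonal subsets of `R₁ = R ∩ V₁` and
`R₂ = R ∩ V₂`. -/
theorem maxStronglyOrth_union_orthogonal
    {V : Type*} [NormedAddCommGroup V] [InnerProductSpace ℝ V]
    (V₁ V₂ : Submodule ℝ V)
    (horth : ∀ x ∈ V₁, ∀ y ∈ V₂, ⟪x, y⟫ = 0)
    (R : Set V) (hfin : R.Finite) (hnz : ∀ α ∈ R, α ≠ 0)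
    (hsub : R ⊆ (V₁ : Set V) ∪ (V₂ : Set V)) :
    maxStronglyOrth R =
      maxStronglyOrth (R ∩ (V₁ : Set V)) + maxStronglyOrth (R ∩ (V₂ : Set V)) := by
  classical
  have hz : ∀ x : V, x ∈ V₁ → x ∈ V₂ → x = 0 := fun x h1 h2 =>
    inner_self_eq_zero.mp (horth x h1 x h2)
  have key : ∀ x y : V, x ∈ V₁ → y ∈ V₂ → x ≠ 0 → y ≠ 0 → x + y ∉ R := by
    intro x y h1 h2 hx hy hmem
    rcases hsub hmem with h | h
    · exact hy (hz y (by simpa using V₁.sub_mem h h1) h2)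
    · exact hx (hz x h1 (by simpa using V₂.sub_mem h h2))
  have cross : ∀ α ∈ R ∩ (V₁ : Set V), ∀ β ∈ R ∩ (V₂ : Set V),
      α ≠ -β ∧ α + β ∉ R ∧ α - β ∉ R := by
    rintro α ⟨hαR, hα1⟩ β ⟨hβR, hβ2⟩
    have hα0 := hnz α hαR
    have hβ0 := hnz β hβR
    refine ⟨?_, key α β hα1 hβ2 hα0 hβ0, ?_⟩
    · rintro rfl
      exact hα0 (hz _ hα1 (V₂.neg_mem hβ2))
    · have := key α (-β) hα1 (V₂.neg_mem hβ2) hα0 (neg_ne_zero.mpr hβ0)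
      simpa [sub_eq_add_neg] using this
  have cross2 : ∀ β ∈ R ∩ (V₂ : Set V), ∀ α ∈ R ∩ (V₁ : Set V),
      β ≠ -α ∧ β + α ∉ R ∧ β - α ∉ R := by
    intro β hβ α hα
    obtain ⟨h1, h2, _⟩ := cross α hα β hβ
    refine ⟨?_, by rwa [add_comm] at h2, ?_⟩
    · intro e
      exact h1 (by rw [e, neg_neg])
    · have := key (-α) β (V₁.neg_mem hα.2) hβ.2
        (neg_ne_zero.mpr (hnz α hα.1)) (hnz β hβ.1)
      simpa [neg_add_eq_sub] using this
  have restrict : ∀ (W : Submodule ℝ V) (S : Set V), IsStronglyOrthSubset R S →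
      IsStronglyOrthSubset (R ∩ (W : Set V)) (S ∩ (W : Set V)) := by
    intro W S hS
    refine ⟨Set.inter_subset_inter_left _ hS.1, ?_⟩
    intro a ha b hb hne
    obtain ⟨h1, h2, h3⟩ := hS.2 ha.1 hb.1 hne
    exact ⟨h1, fun h => h2 h.1, fun h => h3 h.1⟩
  have bdd : ∀ R' : Set V, R' ⊆ R →
      BddAbove {n : ℕ | ∃ S : Set V, IsStronglyOrthSubset R' S ∧ S.ncard = n} := by
    intro R' hR'
    refine ⟨R.ncard, ?_⟩
    rintro n ⟨S, hS, rfl⟩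
    exact Set.ncard_le_ncard (hS.1.trans hR') hfin
  have hne : ∀ R' : Set V,
      {n : ℕ | ∃ S : Set V, IsStronglyOrthSubset R' S ∧ S.ncard = n}.Nonempty :=
    fun R' => ⟨0, ∅, ⟨Set.empty_subset _, Set.pairwise_empty _⟩, by simp⟩
  have hdisj12 : Disjoint (R ∩ (V₁ : Set V)) (R ∩ (V₂ : Set V)) := by
    rw [Set.disjoint_left]
    rintro x ⟨hxR, hx1⟩ ⟨_, hx2⟩
    exact hnz x hxR (hz x hx1 hx2)
  unfold maxStronglyOrth
  apply le_antisymm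
  · refine csSup_le (hne R) ?_
    rintro n ⟨S, hS, rfl⟩
    have hSfin : S.Finite := hfin.subset hS.1
    have hU : S = (S ∩ (V₁ : Set V)) ∪ (S ∩ (V₂ : Set V)) := by
      ext x
      constructor
      · intro hx
        rcases hsub (hS.1 hx) with h | h
        exacts [Or.inl ⟨hx, h⟩, Or.inr ⟨hx, h⟩]
      · rintro (⟨h, _⟩ | ⟨h, _⟩) <;> exact h
    have hsplit : S.ncard = (S ∩ (V₁ : Set V)).ncard + (S ∩ (V₂ : Set V)).ncard := by
      rw [← Set.ncard_union_eq ?_ (hSfin.inter_of_left _) (hSfin.inter_of_left _), ← hU]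
      rw [Set.disjoint_left]
      rintro x ⟨hxS, hx1⟩ ⟨_, hx2⟩
      exact hnz x (hS.1 hxS) (hz x hx1 hx2)
    rw [hsplit]
    exact add_le_add
      (le_csSup (bdd _ Set.inter_subset_left) ⟨_, restrict V₁ S hS, rfl⟩)
      (le_csSup (bdd _ Set.inter_subset_left) ⟨_, restrict V₂ S hS, rfl⟩)
  · obtain ⟨S₁, hS₁, hn₁⟩ := Nat.sSup_mem (hne (R ∩ (V₁ : Set V)))
      (bdd _ Set.inter_subset_left)
    obtain ⟨S₂, hS₂, hn₂⟩ := Nat.sSup_mem (hne (R ∩ (V₂ : Set V)))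
      (bdd _ Set.inter_subset_left)
    have hmem : IsStronglyOrthSubset R (S₁ ∪ S₂) := by
      constructor
      · rintro x (hx | hx)
        exacts [(hS₁.1 hx).1, (hS₂.1 hx).1]
      · rintro α (hα | hα) β (hβ | hβ) hαβ
        · obtain ⟨h1, h2, h3⟩ := hS₁.2 hα hβ hαβ
          exact ⟨h1, fun h => h2 ⟨h, V₁.add_mem (hS₁.1 hα).2 (hS₁.1 hβ).2⟩,
            fun h => h3 ⟨h, V₁.sub_mem (hS₁.1 hα).2 (hS₁.1 hβ).2⟩⟩
        · exact cross α (hS₁.1 hα) β (hS₂.1 hβ)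
        · exact cross2 α (hS₂.1 hα) β (hS₁.1 hβ)
        · obtain ⟨h1, h2, h3⟩ := hS₂.2 hα hβ hαβ
          exact ⟨h1, fun h => h2 ⟨h, V₂.add_mem (hS₂.1 hα).2 (hS₂.1 hβ).2⟩,
            fun h => h3 ⟨h, V₂.sub_mem (hS₂.1 hα).2 (hS₂.1 hβ).2⟩⟩
    have hdS : Disjoint S₁ S₂ := hdisj12.mono hS₁.1 hS₂.1
    have hcard : (S₁ ∪ S₂).ncard = S₁.ncard + S₂.ncard :=
      Set.ncard_union_eq hdS (hfin.subset ((hS₁.1).trans Set.inter_subset_left))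
        (hfin.subset ((hS₂.1).trans Set.inter_subset_left))
    exact le_csSup (bdd R subset_rfl) ⟨S₁ ∪ S₂, hmem, by rw [hcard, hn₁, hn₂]⟩
end

section
/- Let n ≥ 2 and let R = {e_i − e_j : 1 ≤ i, j ≤ n, i ≠ j} ⊂ ℝⁿ be the root system of type A_{n−1}. Then Γ = {e_i − e_{n+1−i} : 1 ≤ i ≤ ⌊n/2⌋} is a strongly orthogonal subset of R with ⌊n/2⌋ elements, and every strongly orthogonal subset of R has at most ⌊n/2⌋ elements. -/
/-- The `i`-th standard basis vector of `ℝⁿ`, in 1-based indexing: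
`stdVec n i` has a `1` in position `i` (for `1 ≤ i ≤ n`) and `0` elsewhere. -/
noncomputable def stdVec (n : ℕ) (i : ℕ) : EuclideanSpace ℝ (Fin n) :=
  (WithLp.equiv 2 (Fin n → ℝ)).symm fun j => if (j : ℕ) + 1 = i then 1 else 0

theorem Set.ncard_le_card_div_two_of_pairwiseDisjoint {α ι : Type*} [Fintype ι] {S : Set α}
    {f : α → Finset ι} (hS : S.PairwiseDisjoint f) (hf : ∀ x ∈ S, (f x).card = 2) :
    S.ncard ≤ Fintype.card ι / 2 := by
  classical
  rcases S.finite_or_infinite with hfin | hinf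
  · obtain ⟨T, rfl⟩ := hfin.exists_finset_coe
    have hsum : (T.biUnion f).card = 2 * T.card := by
      rw [Finset.card_biUnion hS, Finset.sum_congr rfl hf, Finset.sum_const, smul_eq_mul,
        mul_comm]
    have := (T.biUnion f).card_le_univ
    rw [Set.ncard_coe_finset]
    omega
  · rw [hinf.ncard]
    exact Nat.zero_le _

section RootsA

variable {ι : Type*} [DecidableEq ι] {a b c d k : ι}

noncomputable def rootA (a b : ι) : EuclideanSpace ℝ ι :=
  EuclideanSpace.single a 1 - EuclideanSpace.single b 1

variable (ι) in
def rootsA : Set (EuclideanSpace ℝ ι) := {x | ∃ a b, a ≠ b ∧ rootA a b = x}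

lemma rootA_apply (a b k : ι) :
    rootA a b k = (if k = a then 1 else 0) - (if k = b then 1 else 0) := by
  simp [rootA, PiLp.single_apply]

lemma rootA_apply_left (hab : a ≠ b) : rootA a b a = 1 := by
  simp [rootA_apply, hab]

lemma rootA_apply_right (hab : a ≠ b) : rootA a b b = -1 := by
  simp [rootA_apply, hab.symm]

lemma rootA_apply_of_ne (hka : k ≠ a) (hkb : k ≠ b) : rootA a b k = 0 := by
  simp [rootA_apply, hka, hkb]

lemma eq_left_of_rootA_apply_eq_one (h : rootA a b k = 1) : k = a := by
  rw [rootA_apply] at h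
  split_ifs at h with h₁ h₂ <;> first | assumption | norm_num at h

lemma eq_right_of_rootA_apply_eq_neg_one (h : rootA a b k = -1) : k = b := by
  rw [rootA_apply] at h
  split_ifs at h with h₁ h₂ <;> first | assumption | norm_num at h

lemma rootA_inj (hab : a ≠ b) : rootA a b = rootA c d ↔ a = c ∧ b = d := by
  refine ⟨fun h => ⟨?_, ?_⟩, by rintro ⟨rfl, rfl⟩; rfl⟩
  · exact eq_left_of_rootA_apply_eq_one (h ▸ rootA_apply_left hab)
  · exact eq_right_of_rootA_apply_eq_neg_one (h ▸ rootA_apply_right hab)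

lemma rootA_mem_rootsA (hab : a ≠ b) : rootA a b ∈ rootsA ι := ⟨a, b, hab, rfl⟩

lemma neg_rootA (a b : ι) : -rootA a b = rootA b a := by
  simp [rootA]

lemma rootA_add_rootA (a b c : ι) : rootA a b + rootA b c = rootA a c := by
  simp [rootA]

lemma rootA_sub_rootA_left (a b c : ι) : rootA a b - rootA a c = rootA c b := by
  simp only [rootA]; abel

lemma rootA_sub_rootA_right (a b c : ι) : rootA a c - rootA b c = rootA a b := by
  simp only [rootA]; abel

lemma sub_eq_add_rootA (x : EuclideanSpace ℝ ι) (c d : ι) : x - rootA c d = x + rootA d c := by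
  rw [sub_eq_add_neg, neg_rootA]

/-- The sum has coordinate `1` at both `a` and `c`, while a root has only one coordinate
equal to `1`. -/
lemma rootA_add_rootA_notMem (hab : a ≠ b) (hcd : c ≠ d) (hac : a ≠ c) (had : a ≠ d)
    (hbc : b ≠ c) : rootA a b + rootA c d ∉ rootsA ι := by
  rintro ⟨p, q, -, h⟩
  have hap : a = p := eq_left_of_rootA_apply_eq_one (k := a) (b := q) <| by
    rw [h, PiLp.add_apply, rootA_apply_left hab, rootA_apply_of_ne hac had, add_zero]
  have hcp : c = p := eq_left_of_rootA_apply_eq_one (k := c) (b := q) <| by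
    rw [h, PiLp.add_apply, rootA_apply_of_ne hac.symm hbc.symm, rootA_apply_left hcd, zero_add]
  exact hac (hap.trans hcp.symm)

lemma disjoint_pair_iff :
    Disjoint ({a, b} : Finset ι) {c, d} ↔ (a ≠ c ∧ a ≠ d) ∧ b ≠ c ∧ b ≠ d := by
  simp only [Finset.disjoint_insert_left, Finset.disjoint_singleton_left, Finset.mem_insert,
    Finset.mem_singleton, not_or]

theorem stronglyOrth_rootA_iff (hab : a ≠ b) (hcd : c ≠ d) (hne : rootA a b ≠ rootA c d) :
    (rootA a b ≠ -rootA c d ∧ rootA a b + rootA c d ∉ rootsA ι ∧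
        rootA a b - rootA c d ∉ rootsA ι) ↔
      Disjoint ({a, b} : Finset ι) {c, d} := by
  rw [disjoint_pair_iff]
  constructor
  · rintro ⟨hneg, hadd, hsub⟩
    have hac : a ≠ c := by
      rintro rfl
      refine hsub ?_
      rw [rootA_sub_rootA_left]
      exact rootA_mem_rootsA fun hdb => hne (by rw [hdb])
    have had : a ≠ d := by
      rintro rfl
      obtain rfl | hbc := eq_or_ne b c
      · exact hneg (neg_rootA _ _).symm
      · refine hadd ?_
        rw [add_comm, rootA_add_rootA]
        exact rootA_mem_rootsA hbc.symm
    have hbc : b ≠ c := by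
      rintro rfl
      refine hadd ?_
      rw [rootA_add_rootA]
      exact rootA_mem_rootsA had
    have hbd : b ≠ d := by
      rintro rfl
      refine hsub ?_
      rw [rootA_sub_rootA_right]
      exact rootA_mem_rootsA hac
    exact ⟨⟨hac, had⟩, hbc, hbd⟩
  · rintro ⟨⟨hac, had⟩, hbc, hbd⟩
    refine ⟨?_, rootA_add_rootA_notMem hab hcd hac had hbc, ?_⟩
    · rw [neg_rootA, Ne, rootA_inj hab]
      exact fun h => had h.1
    · rw [sub_eq_add_rootA]
      exact rootA_add_rootA_notMem hab hcd.symm had hac hbd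

variable [Fintype ι]

noncomputable def coordSupport (x : EuclideanSpace ℝ ι) : Finset ι := {k | x k ≠ 0}

lemma coordSupport_rootA (hab : a ≠ b) : coordSupport (rootA a b) = {a, b} := by
  ext k
  simp only [coordSupport, Finset.mem_filter, Finset.mem_univ, true_and, Finset.mem_insert,
    Finset.mem_singleton, rootA_apply]
  split_ifs with hka hkb <;> simp_all

lemma pairwiseDisjoint_coordSupport {S : Set (EuclideanSpace ℝ ι)}
    (hS : IsStronglyOrthSubset (rootsA ι) S) : S.PairwiseDisjoint coordSupport := by
  intro x hx y hy hxy
  obtain ⟨a, b, hab, rfl⟩ := hS.1 hx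
  obtain ⟨c, d, hcd, rfl⟩ := hS.1 hy
  rw [Function.onFun, coordSupport_rootA hab, coordSupport_rootA hcd]
  exact (stronglyOrth_rootA_iff hab hcd hxy).1 (hS.2 hx hy hxy)

theorem ncard_le_card_div_two_of_isStronglyOrthSubset {S : Set (EuclideanSpace ℝ ι)}
    (hS : IsStronglyOrthSubset (rootsA ι) S) : S.ncard ≤ Fintype.card ι / 2 := by
  refine Set.ncard_le_card_div_two_of_pairwiseDisjoint (pairwiseDisjoint_coordSupport hS) ?_
  intro x hx
  obtain ⟨a, b, hab, rfl⟩ := hS.1 hx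
  rw [coordSupport_rootA hab, Finset.card_pair hab]

end RootsA

section Antipodal

variable (n : ℕ)

noncomputable def antipodalRoot (k : Fin (n / 2)) : EuclideanSpace ℝ (Fin n) :=
  rootA (k.castLE (Nat.div_le_self n 2)) (k.castLE (Nat.div_le_self n 2)).rev

lemma antipodalRoot_injective : Function.Injective (antipodalRoot n) := by
  intro k l h
  rw [antipodalRoot, antipodalRoot, rootA_inj] at h
  · exact Fin.castLE_injective _ h.1
  · simp only [Ne, Fin.ext_iff, Fin.val_rev, Fin.val_castLE]
    omega

theorem isStronglyOrthSubset_range_antipodalRoot :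
    IsStronglyOrthSubset (rootsA (Fin n)) (Set.range (antipodalRoot n)) := by
  have hne (k : Fin (n / 2)) :
      k.castLE (Nat.div_le_self n 2) ≠ (k.castLE (Nat.div_le_self n 2)).rev := by
    simp only [Ne, Fin.ext_iff, Fin.val_rev, Fin.val_castLE]
    omega
  refine ⟨Set.range_subset_iff.2 fun k => rootA_mem_rootsA (hne k), ?_⟩
  rintro _ ⟨k, rfl⟩ _ ⟨l, rfl⟩ hkl
  refine (stronglyOrth_rootA_iff (hne k) (hne l) hkl).2 (disjoint_pair_iff.2 ?_)
  have hkl' : (k : ℕ) ≠ l := fun h => hkl (by rw [Fin.ext h])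
  simp only [Ne, Fin.ext_iff, Fin.val_rev, Fin.val_castLE]
  omega

end Antipodal

lemma stdVec_eq_single {n i : ℕ} (hi : 1 ≤ i) (hin : i ≤ n) :
    stdVec n i = EuclideanSpace.single ⟨i - 1, by omega⟩ 1 := by
  ext j
  rw [PiLp.single_apply]
  change (if (j : ℕ) + 1 = i then (1 : ℝ) else 0) = _
  exact if_congr (by simp only [Fin.ext_iff]; omega) rfl rfl

lemma setOf_stdVec_sub_stdVec_eq_rootsA (n : ℕ) :
    {x | ∃ i j : ℕ, 1 ≤ i ∧ i ≤ n ∧ 1 ≤ j ∧ j ≤ n ∧ i ≠ j ∧ x = stdVec n i - stdVec n j} =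
      rootsA (Fin n) := by
  ext x
  constructor
  · rintro ⟨i, j, hi, hin, hj, hjn, hij, rfl⟩
    refine ⟨⟨i - 1, by omega⟩, ⟨j - 1, by omega⟩, by simp only [Ne, Fin.ext_iff]; omega, ?_⟩
    rw [rootA, stdVec_eq_single hi hin, stdVec_eq_single hj hjn]
  · rintro ⟨a, b, hab, rfl⟩
    refine ⟨a + 1, b + 1, by omega, a.2, by omega, b.2, by rw [Ne, Fin.ext_iff] at hab; omega, ?_⟩
    rw [rootA, stdVec_eq_single (by omega) a.2, stdVec_eq_single (by omega) b.2]
    rfl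

lemma antipodalRoot_eq_stdVec (n : ℕ) (k : Fin (n / 2)) :
    antipodalRoot n k = stdVec n (k + 1) - stdVec n (n - k) := by
  rw [antipodalRoot, rootA, stdVec_eq_single (by omega) (by omega),
    stdVec_eq_single (i := n - k) (by omega) (by omega)]
  congr 3

lemma setOf_stdVec_sub_stdVec_rev_eq_range_antipodalRoot (n : ℕ) :
    {x | ∃ i : ℕ, 1 ≤ i ∧ i ≤ n / 2 ∧ x = stdVec n i - stdVec n (n + 1 - i)} =
      Set.range (antipodalRoot n) := by
  ext x
  constructor
  · rintro ⟨i, hi, hin, rfl⟩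
    refine ⟨⟨i - 1, by omega⟩, ?_⟩
    rw [antipodalRoot_eq_stdVec, Fin.val_mk]
    congr 2 <;> omega
  · rintro ⟨k, rfl⟩
    refine ⟨k + 1, by omega, k.2, ?_⟩
    rw [antipodalRoot_eq_stdVec]
    congr 2
    omega

theorem typeA_max_strongly_orthogonal_general (n : ℕ)
    (R : Set (EuclideanSpace ℝ (Fin n)))
    (hR : R = {x | ∃ i j : ℕ, 1 ≤ i ∧ i ≤ n ∧ 1 ≤ j ∧ j ≤ n ∧ i ≠ j ∧
      x = stdVec n i - stdVec n j})
    (Γ : Set (EuclideanSpace ℝ (Fin n)))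
    (hΓ : Γ = {x | ∃ i : ℕ, 1 ≤ i ∧ i ≤ n / 2 ∧
      x = stdVec n i - stdVec n (n + 1 - i)}) :
    IsStronglyOrthSubset R Γ ∧ Γ.ncard = n / 2 ∧
      ∀ S : Set (EuclideanSpace ℝ (Fin n)),
        IsStronglyOrthSubset R S → S.ncard ≤ n / 2 := by
  rw [hR, setOf_stdVec_sub_stdVec_eq_rootsA, hΓ,
    setOf_stdVec_sub_stdVec_rev_eq_range_antipodalRoot]
  refine ⟨isStronglyOrthSubset_range_antipodalRoot n, ?_, fun S hS => ?_⟩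
  · rw [Set.ncard_range_of_injective (antipodalRoot_injective n), Nat.card_eq_fintype_card,
      Fintype.card_fin]
  · simpa using ncard_le_card_div_two_of_isStronglyOrthSubset hS

/-- In the root system of type `A_{n−1}`, the set
`Γ = {e_i − e_{n+1−i} : 1 ≤ i ≤ ⌊n/2⌋}` is a strongly orthogonal subset with
`⌊n/2⌋` elements, and every strongly orthogonal subset has at most `⌊n/2⌋`
elements. -/
theorem typeA_max_strongly_orthogonal (n : ℕ) (hn : 2 ≤ n)
    (R : Set (EuclideanSpace ℝ (Fin n)))
    (hR : R = {x | ∃ i j : ℕ, 1 ≤ i ∧ i ≤ n ∧ 1 ≤ j ∧ j ≤ n ∧ i ≠ j ∧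
      x = stdVec n i - stdVec n j})
    (Γ : Set (EuclideanSpace ℝ (Fin n)))
    (hΓ : Γ = {x | ∃ i : ℕ, 1 ≤ i ∧ i ≤ n / 2 ∧
      x = stdVec n i - stdVec n (n + 1 - i)}) :
    IsStronglyOrthSubset R Γ ∧ Γ.ncard = n / 2 ∧
      ∀ S : Set (EuclideanSpace ℝ (Fin n)),
        IsStronglyOrthSubset R S → S.ncard ≤ n / 2 :=
  typeA_max_strongly_orthogonal_general n R hR Γ hΓ
end

section
/- Let ℓ ≥ 2 and let R = {±e_i : 1 ≤ i ≤ ℓ} ∪ {±e_i ± e_j : 1 ≤ i < j ≤ ℓ} ⊂ ℝ^ℓ be the root system of type B_ℓ. Then the set Γ consisting of the vectors e_{2j−1} − e_{2j} and e_{2j−1} + e_{2j} for 1 ≤ j ≤ ⌊ℓ/2⌋, together with the vector e_ℓ when ℓ is odd, is a strongly orthogonal subset of R with ℓ elements, and every strongly orthogonal subset of R has at most ℓ elements. -/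
open Module Submodule
open scoped InnerProductSpace

theorem linearIndepOn_id_of_pairwise_inner_eq_zero {E : Type*} [NormedAddCommGroup E]
    [InnerProductSpace ℝ E] {S : Set E} (h0 : 0 ∉ S)
    (h : S.Pairwise fun x y => ⟪x, y⟫_ℝ = 0) : LinearIndepOn ℝ id S :=
  linearIndependent_of_ne_zero_of_inner_eq_zero (fun x hx => h0 (hx ▸ x.2))
    fun x y hxy => h x.2 y.2 (Subtype.coe_ne_coe.2 hxy)

theorem LinearIndepOn.ncard_eq_finrank_span {K V : Type*} [DivisionRing K] [AddCommGroup V]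
    [Module K V] [FiniteDimensional K V] {S : Set V} (h : LinearIndepOn K id S) :
    S.ncard = finrank K (span K S) := by
  have : Fintype S := (LinearIndependent.setFinite h).fintype
  rw [finrank_span_set_eq_card h, Set.ncard_eq_toFinset_card']

namespace TypeB

variable {n : ℕ}

theorem stdVec_succ (a : Fin n) : stdVec n (a + 1) = EuclideanSpace.single a 1 := by
  ext k
  simp [stdVec, PiLp.single_apply, Fin.val_inj]

theorem stdVec_eq_single {i : ℕ} (hi : 1 ≤ i) (hin : i ≤ n) :
    stdVec n i = EuclideanSpace.single ⟨i - 1, by omega⟩ 1 := by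
  rw [← stdVec_succ, Fin.val_mk, Nat.sub_add_cancel hi]

theorem norm_stdVec {i : ℕ} (hi : 1 ≤ i) (hin : i ≤ n) : ‖stdVec n i‖ = 1 := by
  rw [stdVec_eq_single hi hin, PiLp.norm_single, norm_one]

theorem inner_stdVec_stdVec {i j : ℕ} (hi : 1 ≤ i) (hin : i ≤ n) (hj : 1 ≤ j) (hjn : j ≤ n) :
    ⟪stdVec n i, stdVec n j⟫_ℝ = if i = j then 1 else 0 := by
  rw [stdVec_eq_single hi hin, stdVec_eq_single hj hjn,
    orthonormal_iff_ite.1 EuclideanSpace.orthonormal_single]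
  simp only [Fin.mk.injEq]
  exact if_congr (by omega) rfl rfl

def IsIntVec (x : EuclideanSpace ℝ (Fin n)) : Prop := ∀ k, ∃ z : ℤ, x k = z

theorem isIntVec_stdVec (i : ℕ) : IsIntVec (stdVec n i) := fun k => by
  by_cases h : (k : ℕ) + 1 = i
  · exact ⟨1, by simp [stdVec, h]⟩
  · exact ⟨0, by simp [stdVec, h]⟩

theorem IsIntVec.neg {x : EuclideanSpace ℝ (Fin n)} (hx : IsIntVec x) : IsIntVec (-x) :=
  fun k => let ⟨z, hz⟩ := hx k; ⟨-z, by simp [hz]⟩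

theorem IsIntVec.add {x y : EuclideanSpace ℝ (Fin n)} (hx : IsIntVec x) (hy : IsIntVec y) :
    IsIntVec (x + y) :=
  fun k => let ⟨z, hz⟩ := hx k; let ⟨w, hw⟩ := hy k; ⟨z + w, by simp [hz, hw]⟩

theorem IsIntVec.sub {x y : EuclideanSpace ℝ (Fin n)} (hx : IsIntVec x) (hy : IsIntVec y) :
    IsIntVec (x - y) :=
  sub_eq_add_neg x y ▸ hx.add hy.neg

theorem IsIntVec.inner {x y : EuclideanSpace ℝ (Fin n)} (hx : IsIntVec x) (hy : IsIntVec y) :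
    ∃ z : ℤ, ⟪x, y⟫_ℝ = z := by
  choose f hf using hx
  choose g hg using hy
  exact ⟨∑ k, g k * f k, by simp [PiLp.inner_apply, hf, hg]⟩

theorem IsIntVec.norm_sq {x : EuclideanSpace ℝ (Fin n)} (hx : IsIntVec x) :
    ∃ z : ℤ, ‖x‖ ^ 2 = z :=
  real_inner_self_eq_norm_sq x ▸ hx.inner hx

def rootsB (n : ℕ) : Set (EuclideanSpace ℝ (Fin n)) :=
  {x | ∃ i : ℕ, 1 ≤ i ∧ i ≤ n ∧ (x = stdVec n i ∨ x = -stdVec n i)} ∪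
    {x | ∃ i j : ℕ, 1 ≤ i ∧ i < j ∧ j ≤ n ∧
      (x = stdVec n i + stdVec n j ∨ x = stdVec n i - stdVec n j ∨
       x = -stdVec n i + stdVec n j ∨ x = -stdVec n i - stdVec n j)}

theorem isIntVec_and_norm_sq_of_mem_rootsB {x : EuclideanSpace ℝ (Fin n)} (hx : x ∈ rootsB n) :
    IsIntVec x ∧ (‖x‖ ^ 2 = 1 ∨ ‖x‖ ^ 2 = 2) := by
  have he := isIntVec_stdVec (n := n)
  rcases hx with ⟨i, hi, hin, rfl | rfl⟩ | ⟨i, j, hi, hij, hjn, rfl | rfl | rfl | rfl⟩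
  · exact ⟨he i, .inl (by rw [norm_stdVec hi hin, one_pow])⟩
  · exact ⟨(he i).neg, .inl (by rw [norm_neg, norm_stdVec hi hin, one_pow])⟩
  all_goals
    refine ⟨by first | exact (he i).add (he j) | exact (he i).sub (he j) |
      exact (he i).neg.add (he j) | exact (he i).neg.sub (he j), .inr ?_⟩
    simp (disch := omega) only [← real_inner_self_eq_norm_sq, inner_add_left, inner_add_right,
      inner_sub_left, inner_sub_right, inner_neg_left, inner_neg_right, inner_stdVec_stdVec,
      if_neg hij.ne, if_neg hij.ne']
    norm_num

theorem smul_single_mem_rootsB (a : Fin n) {s : ℝ} (hs : s = 1 ∨ s = -1) :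
    s • EuclideanSpace.single a 1 ∈ rootsB n := by
  refine Or.inl ⟨a + 1, by omega, a.isLt, ?_⟩
  rcases hs with rfl | rfl <;> simp [stdVec_succ]

theorem add_smul_single_mem_rootsB {a b : Fin n} (hab : a < b) {s t : ℝ} (hs : s = 1 ∨ s = -1)
    (ht : t = 1 ∨ t = -1) :
    s • EuclideanSpace.single a 1 + t • EuclideanSpace.single b 1 ∈ rootsB n := by
  refine Or.inr ⟨a + 1, b + 1, by omega, by simpa using hab, b.isLt, ?_⟩
  rcases hs with rfl | rfl <;> rcases ht with rfl | rfl <;>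
    simp [stdVec_succ, sub_eq_add_neg]

theorem IsIntVec.apply_mem_of_norm_sq_le_two {x : EuclideanSpace ℝ (Fin n)} (hx : IsIntVec x)
    (h2 : ‖x‖ ^ 2 ≤ 2) (k : Fin n) : x k = -1 ∨ x k = 0 ∨ x k = 1 := by
  obtain ⟨z, hz⟩ := hx k
  have hk : x k ^ 2 ≤ ‖x‖ ^ 2 := by
    rw [EuclideanSpace.real_norm_sq_eq]
    exact Finset.single_le_sum (fun j _ => sq_nonneg (x j)) (Finset.mem_univ k)
  have hzR : (z : ℝ) ^ 2 ≤ 2 := hz ▸ hk.trans h2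
  have hz2 : z ^ 2 ≤ 2 := by exact_mod_cast hzR
  have hlo : -1 ≤ z := by nlinarith
  have hhi : z ≤ 1 := by nlinarith
  rw [hz]
  interval_cases z <;> norm_num

theorem eq_sum_support (x : EuclideanSpace ℝ (Fin n)) :
    x = ∑ k ∈ Finset.univ.filter (x · ≠ 0), x k • EuclideanSpace.single k 1 := by
  ext j
  by_cases hj : x j = 0 <;> simp [Pi.single_apply, hj]

theorem mem_rootsB_of_isIntVec {x : EuclideanSpace ℝ (Fin n)} (hx : IsIntVec x)
    (hnorm : ‖x‖ ^ 2 = 1 ∨ ‖x‖ ^ 2 = 2) : x ∈ rootsB n := by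
  have hval := hx.apply_mem_of_norm_sq_le_two (by rcases hnorm with h | h <;> linarith)
  set s := Finset.univ.filter (x · ≠ 0)
  have hunit : ∀ k ∈ s, x k = 1 ∨ x k = -1 := fun k hk => by
    have := (Finset.mem_filter.1 hk).2
    rcases hval k with h | h | h <;> simp_all
  have hcard : ‖x‖ ^ 2 = s.card := by
    rw [EuclideanSpace.real_norm_sq_eq, Finset.natCast_card_filter]
    refine Finset.sum_congr rfl fun k _ => ?_
    rcases hval k with h | h | h <;> simp [h]
  have hsum : x = ∑ k ∈ s, x k • EuclideanSpace.single k 1 := eq_sum_support x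
  obtain hs1 | hs2 : s.card = 1 ∨ s.card = 2 := by
    rw [hcard] at hnorm; exact_mod_cast hnorm
  · obtain ⟨a, ha⟩ := Finset.card_eq_one.1 hs1
    rw [hsum, ha, Finset.sum_singleton]
    exact smul_single_mem_rootsB a (hunit a (by simp [ha]))
  · obtain ⟨a, b, hab, hab'⟩ := Finset.card_eq_two.1 hs2
    have ha := hunit a (by simp [hab'])
    have hb := hunit b (by simp [hab'])
    rw [hsum, hab', Finset.sum_pair hab]
    rcases hab.lt_or_gt with h | h
    · exact add_smul_single_mem_rootsB h ha hb
    · rw [add_comm]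
      exact add_smul_single_mem_rootsB h hb ha

theorem mem_rootsB_iff {x : EuclideanSpace ℝ (Fin n)} :
    x ∈ rootsB n ↔ IsIntVec x ∧ (‖x‖ ^ 2 = 1 ∨ ‖x‖ ^ 2 = 2) :=
  ⟨isIntVec_and_norm_sq_of_mem_rootsB, fun h => mem_rootsB_of_isIntVec h.1 h.2⟩

theorem norm_sq_le_two_of_mem_rootsB {x : EuclideanSpace ℝ (Fin n)} (hx : x ∈ rootsB n) :
    ‖x‖ ^ 2 ≤ 2 := by
  rcases (mem_rootsB_iff.1 hx).2 with h | h <;> linarith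

theorem zero_notMem_rootsB : (0 : EuclideanSpace ℝ (Fin n)) ∉ rootsB n := fun h => by
  rcases (mem_rootsB_iff.1 h).2 with h | h <;> simp at h

theorem neg_mem_rootsB {x : EuclideanSpace ℝ (Fin n)} (hx : x ∈ rootsB n) : -x ∈ rootsB n := by
  obtain ⟨hZ, hnorm⟩ := mem_rootsB_iff.1 hx
  exact mem_rootsB_iff.2 ⟨hZ.neg, by rwa [norm_neg]⟩

theorem sub_mem_rootsB_of_inner_pos {α β : EuclideanSpace ℝ (Fin n)} (hα : α ∈ rootsB n)
    (hβ : β ∈ rootsB n) (hne : α ≠ β) (hpos : 0 < ⟪α, β⟫_ℝ) : α - β ∈ rootsB n := by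
  obtain ⟨hαZ, hα⟩ := mem_rootsB_iff.1 hα
  obtain ⟨hβZ, hβ⟩ := mem_rootsB_iff.1 hβ
  refine mem_rootsB_iff.2 ⟨hαZ.sub hβZ, ?_⟩
  obtain ⟨z, hz⟩ := hαZ.inner hβZ
  obtain ⟨m, hm⟩ := (hαZ.sub hβZ).norm_sq
  have hexp : ‖α - β‖ ^ 2 = ‖α‖ ^ 2 - 2 * ⟪α, β⟫_ℝ + ‖β‖ ^ 2 := norm_sub_sq_real α β
  have hm0 : 0 < ‖α - β‖ ^ 2 := by have := sub_ne_zero.2 hne; positivity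
  rw [hm] at hexp hm0 ⊢
  rw [hz] at hexp hpos
  have hz1 : 1 ≤ z := by exact_mod_cast hpos
  have hm2 : (m : ℝ) ≤ 2 := by
    have : (1 : ℝ) ≤ z := by exact_mod_cast hz1
    rcases hα with h | h <;> rcases hβ with h' | h' <;> linarith
  have hm0' : 0 < m := by exact_mod_cast hm0
  have hm2' : m ≤ 2 := by exact_mod_cast hm2
  interval_cases m <;> norm_num

theorem pairwise_inner_eq_zero_of_isStronglyOrthSubset {S : Set (EuclideanSpace ℝ (Fin n))}
    (hS : IsStronglyOrthSubset (rootsB n) S) : S.Pairwise fun α β => ⟪α, β⟫_ℝ = 0 := by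
  intro α hα β hβ hne
  obtain ⟨hneg, hadd, hsub⟩ := hS.2 hα hβ hne
  rcases lt_trichotomy ⟪α, β⟫_ℝ 0 with hlt | heq | hgt
  · refine absurd ?_ hadd
    simpa using sub_mem_rootsB_of_inner_pos (hS.1 hα) (neg_mem_rootsB (hS.1 hβ)) hneg
      (by rwa [inner_neg_right, neg_pos])
  · exact heq
  · exact absurd (sub_mem_rootsB_of_inner_pos (hS.1 hα) (hS.1 hβ) hne hgt) hsub

theorem ncard_le_of_isStronglyOrthSubset {S : Set (EuclideanSpace ℝ (Fin n))}
    (hS : IsStronglyOrthSubset (rootsB n) S) : S.ncard ≤ n := by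
  have hli := linearIndepOn_id_of_pairwise_inner_eq_zero (fun h0 => zero_notMem_rootsB (hS.1 h0))
    (pairwise_inner_eq_zero_of_isStronglyOrthSubset hS)
  calc S.ncard = finrank ℝ (span ℝ S) := hli.ncard_eq_finrank_span
    _ ≤ finrank ℝ (EuclideanSpace ℝ (Fin n)) := Submodule.finrank_le _
    _ = n := finrank_euclideanSpace_fin

theorem isStronglyOrthSubset_rootsB {S : Set (EuclideanSpace ℝ (Fin n))} (hS : S ⊆ rootsB n)
    (h : S.Pairwise fun α β => ⟪α, β⟫_ℝ = 0 ∧ 2 < ‖α‖ ^ 2 + ‖β‖ ^ 2) :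
    IsStronglyOrthSubset (rootsB n) S := by
  refine ⟨hS, fun α hα β hβ hne => ?_⟩
  obtain ⟨h0, h2⟩ := h hα hβ hne
  have hadd : 2 < ‖α + β‖ ^ 2 := by rw [norm_add_sq_real, h0]; linarith
  have hsub : 2 < ‖α - β‖ ^ 2 := by rw [norm_sub_sq_real, h0]; linarith
  refine ⟨fun h => ?_, fun h => ?_, fun h => ?_⟩
  · rw [h, neg_add_cancel, norm_zero] at hadd; norm_num at hadd
  · linarith [norm_sq_le_two_of_mem_rootsB h]
  · linarith [norm_sq_le_two_of_mem_rootsB h]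

def gammaB (n : ℕ) : Set (EuclideanSpace ℝ (Fin n)) :=
  {x | ∃ j : ℕ, 1 ≤ j ∧ j ≤ n / 2 ∧
      (x = stdVec n (2 * j - 1) - stdVec n (2 * j) ∨
       x = stdVec n (2 * j - 1) + stdVec n (2 * j))} ∪
    {x | Odd n ∧ x = stdVec n n}

theorem gammaB_subset_rootsB : gammaB n ⊆ rootsB n := by
  rintro x (⟨j, hj, hjn, hx | hx⟩ | ⟨⟨t, ht⟩, hx⟩)
  · exact Or.inr ⟨2 * j - 1, 2 * j, by omega, by omega, by omega, Or.inr (Or.inl hx)⟩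
  · exact Or.inr ⟨2 * j - 1, 2 * j, by omega, by omega, by omega, Or.inl hx⟩
  · exact Or.inl ⟨n, by omega, le_rfl, Or.inl hx⟩

noncomputable def blockVec (n j : ℕ) (s : ℝ) : EuclideanSpace ℝ (Fin n) :=
  stdVec n (2 * j - 1) + s • stdVec n (2 * j)

theorem blockVec_mem_gammaB {j : ℕ} (hj : 1 ≤ j) (hjn : j ≤ n / 2) {s : ℝ}
    (hs : s = 1 ∨ s = -1) : blockVec n j s ∈ gammaB n := by
  rcases hs with rfl | rfl
  · exact Or.inl ⟨j, hj, hjn, Or.inr (by rw [blockVec, one_smul])⟩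
  · exact Or.inl ⟨j, hj, hjn, Or.inl (by rw [blockVec, neg_one_smul, sub_eq_add_neg])⟩

theorem exists_blockVec_of_mem_gammaB {x : EuclideanSpace ℝ (Fin n)} (hx : x ∈ gammaB n) :
    (∃ j s, 1 ≤ j ∧ 2 * j ≤ n ∧ (s = 1 ∨ s = -1) ∧ x = blockVec n j s) ∨
      (Odd n ∧ x = stdVec n n) := by
  rcases hx with ⟨j, hj, hjn, rfl | rfl⟩ | hx
  · refine Or.inl ⟨j, -1, hj, by omega, Or.inr rfl, ?_⟩
    rw [blockVec, neg_one_smul, sub_eq_add_neg]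
  · exact Or.inl ⟨j, 1, hj, by omega, Or.inl rfl, by rw [blockVec, one_smul]⟩
  · exact Or.inr hx

theorem inner_blockVec_blockVec {j k : ℕ} (hj : 1 ≤ j) (hjn : 2 * j ≤ n) (hk : 1 ≤ k)
    (hkn : 2 * k ≤ n) (s t : ℝ) :
    ⟪blockVec n j s, blockVec n k t⟫_ℝ = if j = k then 1 + s * t else 0 := by
  simp (disch := omega) only [blockVec, inner_add_left, inner_add_right, real_inner_smul_left,
    real_inner_smul_right, inner_stdVec_stdVec]
  split_ifs <;> first | omega | ring

theorem inner_blockVec_stdVec {j : ℕ} (hj : 1 ≤ j) (hjn : 2 * j < n) (s : ℝ) :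
    ⟪blockVec n j s, stdVec n n⟫_ℝ = 0 := by
  simp (disch := omega) only [blockVec, inner_add_left, real_inner_smul_left, inner_stdVec_stdVec]
  split_ifs <;> first | omega | ring

theorem norm_sq_blockVec {j : ℕ} (hj : 1 ≤ j) (hjn : 2 * j ≤ n) {s : ℝ} (hs : s = 1 ∨ s = -1) :
    ‖blockVec n j s‖ ^ 2 = 2 := by
  rw [← real_inner_self_eq_norm_sq, inner_blockVec_blockVec hj hjn hj hjn, if_pos rfl]
  rcases hs with rfl | rfl <;> norm_num

theorem gammaB_pairwise :
    (gammaB n).Pairwise fun α β => ⟪α, β⟫_ℝ = 0 ∧ 2 < ‖α‖ ^ 2 + ‖β‖ ^ 2 := by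
  intro α hα β hβ hne
  rcases exists_blockVec_of_mem_gammaB hα with ⟨j, s, hj, hjn, hs, rfl⟩ | ⟨⟨m, hm⟩, rfl⟩ <;>
    rcases exists_blockVec_of_mem_gammaB hβ with ⟨k, t, hk, hkn, ht, rfl⟩ | ⟨⟨m, hm⟩, rfl⟩
  · rw [inner_blockVec_blockVec hj hjn hk hkn, norm_sq_blockVec hj hjn hs,
      norm_sq_blockVec hk hkn ht]
    obtain rfl | hjk := eq_or_ne j k
    · rcases hs with rfl | rfl <;> rcases ht with rfl | rfl <;>
        first | exact absurd rfl hne | norm_num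
    · norm_num [hjk]
  · rw [inner_blockVec_stdVec hj (by omega), norm_sq_blockVec hj hjn hs,
      norm_stdVec (by omega) le_rfl]
    norm_num
  · rw [real_inner_comm, inner_blockVec_stdVec hk (by omega), norm_sq_blockVec hk hkn ht,
      norm_stdVec (by omega) le_rfl]
    norm_num
  · exact absurd rfl hne

theorem stdVec_mem_span_gammaB {i : ℕ} (hi : 1 ≤ i) (hin : i ≤ n) :
    stdVec n i ∈ span ℝ (gammaB n) := by
  by_cases hblock : 2 * ((i + 1) / 2) ≤ n
  · set j := (i + 1) / 2
    have hp := subset_span (R := ℝ) (blockVec_mem_gammaB (n := n) (j := j) (by omega) (by omega)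
      (Or.inl rfl))
    have hm := subset_span (R := ℝ) (blockVec_mem_gammaB (n := n) (j := j) (by omega) (by omega)
      (Or.inr rfl))
    obtain h | h : i = 2 * j - 1 ∨ i = 2 * j := by omega
    · convert smul_mem _ (1 / 2 : ℝ) (add_mem hp hm) using 1
      rw [h, blockVec, blockVec]
      module
    · convert smul_mem _ (1 / 2 : ℝ) (sub_mem hp hm) using 1
      rw [h, blockVec, blockVec]
      module
  · obtain rfl : i = n := by omega
    exact subset_span (Or.inr ⟨⟨(i - 1) / 2, by omega⟩, rfl⟩)

theorem span_gammaB : span ℝ (gammaB n) = ⊤ := by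
  rw [eq_top_iff, ← (EuclideanSpace.basisFun (Fin n) ℝ).toBasis.span_eq, span_le]
  rintro _ ⟨a, rfl⟩
  rw [OrthonormalBasis.coe_toBasis, EuclideanSpace.basisFun_apply, ← stdVec_succ]
  exact stdVec_mem_span_gammaB (by omega) a.isLt

end TypeB

open TypeB in
theorem typeB_max_strongly_orthogonal_general (l : ℕ)
    (R : Set (EuclideanSpace ℝ (Fin l)))
    (hR : R = {x | ∃ i : ℕ, 1 ≤ i ∧ i ≤ l ∧
        (x = stdVec l i ∨ x = -stdVec l i)} ∪
      {x | ∃ i j : ℕ, 1 ≤ i ∧ i < j ∧ j ≤ l ∧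
        (x = stdVec l i + stdVec l j ∨ x = stdVec l i - stdVec l j ∨
         x = -stdVec l i + stdVec l j ∨ x = -stdVec l i - stdVec l j)})
    (Γ : Set (EuclideanSpace ℝ (Fin l)))
    (hΓ : Γ = {x | ∃ j : ℕ, 1 ≤ j ∧ j ≤ l / 2 ∧
        (x = stdVec l (2 * j - 1) - stdVec l (2 * j) ∨
         x = stdVec l (2 * j - 1) + stdVec l (2 * j))} ∪
      {x | Odd l ∧ x = stdVec l l}) :
    IsStronglyOrthSubset R Γ ∧ Γ.ncard = l ∧
      ∀ S : Set (EuclideanSpace ℝ (Fin l)),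
        IsStronglyOrthSubset R S → S.ncard ≤ l := by
  obtain rfl : R = rootsB l := hR
  obtain rfl : Γ = gammaB l := hΓ
  refine ⟨isStronglyOrthSubset_rootsB gammaB_subset_rootsB gammaB_pairwise, ?_,
    fun S => ncard_le_of_isStronglyOrthSubset⟩
  have hli : LinearIndepOn ℝ id (gammaB l) := linearIndepOn_id_of_pairwise_inner_eq_zero
    (fun h0 => zero_notMem_rootsB (gammaB_subset_rootsB h0))
    (gammaB_pairwise.imp fun _ _ => And.left)
  rw [hli.ncard_eq_finrank_span, span_gammaB, finrank_top, finrank_euclideanSpace_fin]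

/-- In the root system of type `B_ℓ`, the set `Γ` consisting of
`e_{2j−1} ± e_{2j}` for `1 ≤ j ≤ ⌊ℓ/2⌋`, together with `e_ℓ` when `ℓ` is odd,
is a strongly orthogonal subset with `ℓ` elements, and every strongly
orthogonal subset has at most `ℓ` elements. -/
theorem typeB_max_strongly_orthogonal (l : ℕ) (hl : 2 ≤ l)
    (R : Set (EuclideanSpace ℝ (Fin l)))
    (hR : R = {x | ∃ i : ℕ, 1 ≤ i ∧ i ≤ l ∧
        (x = stdVec l i ∨ x = -stdVec l i)} ∪
      {x | ∃ i j : ℕ, 1 ≤ i ∧ i < j ∧ j ≤ l ∧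
        (x = stdVec l i + stdVec l j ∨ x = stdVec l i - stdVec l j ∨
         x = -stdVec l i + stdVec l j ∨ x = -stdVec l i - stdVec l j)})
    (Γ : Set (EuclideanSpace ℝ (Fin l)))
    (hΓ : Γ = {x | ∃ j : ℕ, 1 ≤ j ∧ j ≤ l / 2 ∧
        (x = stdVec l (2 * j - 1) - stdVec l (2 * j) ∨
         x = stdVec l (2 * j - 1) + stdVec l (2 * j))} ∪
      {x | Odd l ∧ x = stdVec l l}) :
    IsStronglyOrthSubset R Γ ∧ Γ.ncard = l ∧
      ∀ S : Set (EuclideanSpace ℝ (Fin l)),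
        IsStronglyOrthSubset R S → S.ncard ≤ l :=
  typeB_max_strongly_orthogonal_general l R hR Γ hΓ
end

section
/- Let ℓ ≥ 2 and let R = {±e_i ± e_j : 1 ≤ i < j ≤ ℓ} ⊂ ℝ^ℓ be the root system of type D_ℓ. Then the set Γ = {e_{2h−1} − e_{2h}, e_{2h−1} + e_{2h} : 1 ≤ h ≤ ⌊ℓ/2⌋} is a strongly orthogonal subset of R with 2⌊ℓ/2⌋ elements, and every strongly orthogonal subset of R has at most 2⌊ℓ/2⌋ elements. In particular, when ℓ is odd no strongly orthogonal subset of R has ℓ elements. -/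
/-!
A root `±e_a ± e_b` of type `D` has support `{a, b}`. If two strongly orthogonal roots shared
exactly one index, then `α + β` or `α - β` would cancel that coordinate and be a root; so their
supports are equal or disjoint. Roots with the same support and the same sign product
`α_a α_b` are equal or opposite, so each support carries at most two elements of a strongly
orthogonal set. Disjoint two-element supports in `{1, …, ℓ}` number at most `⌊ℓ/2⌋`, whence the
bound `2⌊ℓ/2⌋`. It is attained by `Γ`: roots on different pairs have disjoint supports, and
`e_{2h-1} ± e_{2h}` sum to `2 e_{2h-1}` and differ by `2 e_{2h}`, neither of which is a root.
-/

open EuclideanSpace (single)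

def StronglyOrth {V : Type*} [AddCommGroup V] (R : Set V) (α β : V) : Prop :=
  α ≠ -β ∧ α + β ∉ R ∧ α - β ∉ R

def IsSign (s : ℝ) : Prop := s = 1 ∨ s = -1

namespace IsSign

variable {s t s' t' : ℝ}

lemma ne_zero (hs : IsSign s) : s ≠ 0 := by
  rcases hs with rfl | rfl <;> norm_num

lemma neg (hs : IsSign s) : IsSign (-s) := by
  rcases hs with rfl | rfl <;> norm_num [IsSign]

lemma eq_or_eq_neg (hs : IsSign s) (hs' : IsSign s') : s' = s ∨ s' = -s := by
  rcases hs with rfl | rfl <;> rcases hs' with rfl | rfl <;> norm_num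

lemma eq_and_eq_or_eq_neg_and_eq_neg_of_mul_eq (hs : IsSign s) (ht : IsSign t)
    (hs' : IsSign s') (ht' : IsSign t') (h : s * t = s' * t') :
    s = s' ∧ t = t' ∨ s = -s' ∧ t = -t' := by
  rcases hs with rfl | rfl <;> rcases ht with rfl | rfl <;>
    rcases hs' with rfl | rfl <;> rcases ht' with rfl | rfl <;> norm_num at h <;> norm_num

lemma mul (hs : IsSign s) (ht : IsSign t) : IsSign (s * t) := by
  rcases hs with rfl | rfl <;> rcases ht with rfl | rfl <;> norm_num [IsSign]

end IsSign

open Finset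

namespace RootSystemD

variable {n : ℕ}

noncomputable def pairVec (a b : Fin n) (s t : ℝ) : EuclideanSpace ℝ (Fin n) :=
  s • single a 1 + t • single b 1

lemma pairVec_apply (a b : Fin n) (s t : ℝ) (k : Fin n) :
    pairVec a b s t k = (if k = a then s else 0) + (if k = b then t else 0) := by
  simp [pairVec]

@[simp]
lemma pairVec_apply_left {a b : Fin n} (hab : a ≠ b) (s t : ℝ) : pairVec a b s t a = s := by
  simp [pairVec_apply, hab]

@[simp]
lemma pairVec_apply_right {a b : Fin n} (hab : a ≠ b) (s t : ℝ) : pairVec a b s t b = t := by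
  simp [pairVec_apply, hab.symm]

lemma pairVec_comm (a b : Fin n) (s t : ℝ) : pairVec a b s t = pairVec b a t s :=
  add_comm _ _

lemma pairVec_neg (a b : Fin n) (s t : ℝ) : pairVec a b (-s) (-t) = -pairVec a b s t := by
  simp only [pairVec, neg_smul, neg_add]

/-- Unlike `stdVec`, indices start at `0` here. -/
def rootsD (n : ℕ) : Set (EuclideanSpace ℝ (Fin n)) :=
  {x | ∃ a b, a ≠ b ∧ ∃ s t, IsSign s ∧ IsSign t ∧ x = pairVec a b s t}

lemma pairVec_mem_rootsD {a b : Fin n} (hab : a ≠ b) {s t : ℝ} (hs : IsSign s)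
    (ht : IsSign t) : pairVec a b s t ∈ rootsD n :=
  ⟨a, b, hab, s, t, hs, ht, rfl⟩

noncomputable def supp (x : EuclideanSpace ℝ (Fin n)) : Finset (Fin n) := {k | x k ≠ 0}

@[simp]
lemma mem_supp {x : EuclideanSpace ℝ (Fin n)} {k : Fin n} : k ∈ supp x ↔ x k ≠ 0 := by
  simp [supp]

@[simp]
lemma supp_neg (x : EuclideanSpace ℝ (Fin n)) : supp (-x) = supp x := by
  ext; simp

lemma supp_add_of_disjoint {x y : EuclideanSpace ℝ (Fin n)} (h : Disjoint (supp x) (supp y)) :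
    supp (x + y) = supp x ∪ supp y := by
  ext k
  have : x k ≠ 0 → y k = 0 := fun hx => by simpa using disjoint_left.1 h (mem_supp.2 hx)
  simp only [mem_supp, mem_union, PiLp.add_apply] at this ⊢
  by_cases hx : x k = 0 <;> by_cases hy : y k = 0 <;> simp_all

lemma supp_pairVec {a b : Fin n} (hab : a ≠ b) {s t : ℝ} (hs : s ≠ 0) (ht : t ≠ 0) :
    supp (pairVec a b s t) = {a, b} := by
  ext k
  simp only [mem_supp, pairVec_apply, mem_insert, mem_singleton]
  by_cases hka : k = a <;> by_cases hkb : k = b <;> simp_all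

lemma eq_pairVec_of_supp_eq {x : EuclideanSpace ℝ (Fin n)} {a b : Fin n} (hab : a ≠ b)
    (hx : supp x = {a, b}) : x = pairVec a b (x a) (x b) := by
  ext k
  have hk : k ≠ a → k ≠ b → x k = 0 := by
    have := congrArg (k ∈ ·) hx
    simp only [mem_supp, mem_insert, mem_singleton, eq_iff_iff] at this
    tauto
  rw [pairVec_apply]
  by_cases hka : k = a <;> by_cases hkb : k = b <;> simp_all

variable {x α β : EuclideanSpace ℝ (Fin n)}

lemma apply_eq_zero_or_isSign (hx : x ∈ rootsD n) (k : Fin n) : x k = 0 ∨ IsSign (x k) := by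
  obtain ⟨a, b, hab, s, t, hs, ht, rfl⟩ := hx
  rw [pairVec_apply]
  by_cases hka : k = a <;> by_cases hkb : k = b <;> simp_all

lemma isSign_apply_of_mem_supp (hx : x ∈ rootsD n) {k : Fin n} (hk : k ∈ supp x) :
    IsSign (x k) :=
  (apply_eq_zero_or_isSign hx k).resolve_left (mem_supp.1 hk)

lemma abs_apply_le_one (hx : x ∈ rootsD n) (k : Fin n) : |x k| ≤ 1 := by
  rcases apply_eq_zero_or_isSign hx k with h | h | h <;> simp [h]

lemma exists_supp_eq_pair (hx : x ∈ rootsD n) : ∃ a b, a ≠ b ∧ supp x = {a, b} := by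
  obtain ⟨a, b, hab, s, t, hs, ht, rfl⟩ := hx
  exact ⟨a, b, hab, supp_pairVec hab hs.ne_zero ht.ne_zero⟩

lemma card_supp_of_mem_rootsD (hx : x ∈ rootsD n) : #(supp x) = 2 := by
  obtain ⟨a, b, hab, h⟩ := exists_supp_eq_pair hx
  rw [h, card_pair hab]

lemma exists_supp_eq_pair_of_mem_supp (hx : x ∈ rootsD n) {c : Fin n} (hc : c ∈ supp x) :
    ∃ d, c ≠ d ∧ supp x = {c, d} := by
  obtain ⟨a, b, hab, h⟩ := exists_supp_eq_pair hx
  rw [h, mem_insert, mem_singleton] at hc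
  rcases hc with rfl | rfl
  · exact ⟨b, hab, h⟩
  · exact ⟨a, hab.symm, h.trans (pair_comm _ _)⟩

lemma neg_mem_rootsD (hx : x ∈ rootsD n) : -x ∈ rootsD n := by
  obtain ⟨a, b, hab, s, t, hs, ht, rfl⟩ := hx
  rw [← pairVec_neg]
  exact pairVec_mem_rootsD hab hs.neg ht.neg

lemma isSign_prod_supp (hx : x ∈ rootsD n) : IsSign (∏ k ∈ supp x, x k) :=
  prod_induction _ IsSign (fun _ _ => IsSign.mul) (Or.inl rfl)
    fun _ hk => isSign_apply_of_mem_supp hx hk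

lemma add_notMem_rootsD_of_disjoint_supp (hα : α ∈ rootsD n) (hβ : β ∈ rootsD n)
    (h : Disjoint (supp α) (supp β)) : α + β ∉ rootsD n := by
  intro hsum
  have := card_supp_of_mem_rootsD hsum
  rw [supp_add_of_disjoint h, card_union_of_disjoint h, card_supp_of_mem_rootsD hα,
    card_supp_of_mem_rootsD hβ] at this
  norm_num at this

lemma stronglyOrth_of_disjoint_supp (hα : α ∈ rootsD n) (hβ : β ∈ rootsD n)
    (h : Disjoint (supp α) (supp β)) : StronglyOrth (rootsD n) α β := by
  refine ⟨?_, add_notMem_rootsD_of_disjoint_supp hα hβ h, ?_⟩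
  · rintro rfl
    rw [supp_neg, disjoint_self] at h
    simpa [h] using card_supp_of_mem_rootsD hβ
  · rw [sub_eq_add_neg]
    exact add_notMem_rootsD_of_disjoint_supp hα (neg_mem_rootsD hβ) (by rwa [supp_neg])

lemma stronglyOrth_pairVec_pairVec_neg {a b : Fin n} (hab : a ≠ b) {s t : ℝ} (hs : IsSign s)
    (ht : IsSign t) : StronglyOrth (rootsD n) (pairVec a b s t) (pairVec a b s (-t)) := by
  have hs2 : 1 < |s + s| := by rcases hs with rfl | rfl <;> norm_num
  have ht2 : 1 < |t + t| := by rcases ht with rfl | rfl <;> norm_num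
  refine ⟨fun h => ?_, fun h => ?_, fun h => ?_⟩
  · have := congrArg (· a) h
    simp only [PiLp.neg_apply, pairVec_apply_left hab] at this
    exact hs.ne_zero (by linarith)
  · have := abs_apply_le_one h a
    simp only [PiLp.add_apply, pairVec_apply_left hab] at this
    linarith
  · have := abs_apply_le_one h b
    simp only [PiLp.sub_apply, pairVec_apply_right hab, sub_neg_eq_add] at this
    linarith

lemma add_mem_or_sub_mem_of_pairVec {c d d' : Fin n} (hd : d ≠ d') {s t s' t' : ℝ}
    (hs : IsSign s) (ht : IsSign t) (hs' : IsSign s') (ht' : IsSign t') :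
    pairVec c d s t + pairVec c d' s' t' ∈ rootsD n ∨
      pairVec c d s t - pairVec c d' s' t' ∈ rootsD n := by
  rcases hs.eq_or_eq_neg hs' with rfl | rfl
  · right
    convert pairVec_mem_rootsD hd ht ht'.neg using 1
    simp only [pairVec]
    module
  · left
    convert pairVec_mem_rootsD hd ht ht' using 1
    simp only [pairVec]
    module

lemma supp_eq_or_disjoint_of_stronglyOrth (hα : α ∈ rootsD n) (hβ : β ∈ rootsD n)
    (h : StronglyOrth (rootsD n) α β) : supp α = supp β ∨ Disjoint (supp α) (supp β) := by
  by_contra! hne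
  obtain ⟨c, hcα, hcβ⟩ := not_disjoint_iff.1 hne.2
  obtain ⟨d, hcd, hα'⟩ := exists_supp_eq_pair_of_mem_supp hα hcα
  obtain ⟨d', hcd', hβ'⟩ := exists_supp_eq_pair_of_mem_supp hβ hcβ
  have hdd' : d ≠ d' := by
    rintro rfl
    exact hne.1 (hα'.trans hβ'.symm)
  have hdα : d ∈ supp α := by simp [hα']
  have hdβ : d' ∈ supp β := by simp [hβ']
  rw [eq_pairVec_of_supp_eq hcd hα', eq_pairVec_of_supp_eq hcd' hβ'] at h
  rcases add_mem_or_sub_mem_of_pairVec hdd' (isSign_apply_of_mem_supp hα hcα)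
    (isSign_apply_of_mem_supp hα hdα) (isSign_apply_of_mem_supp hβ hcβ)
    (isSign_apply_of_mem_supp hβ hdβ) with h' | h'
  exacts [h.2.1 h', h.2.2 h']

lemma eq_or_eq_neg_of_supp_eq (hα : α ∈ rootsD n) (hβ : β ∈ rootsD n)
    (hsupp : supp α = supp β) (hprod : ∏ k ∈ supp α, α k = ∏ k ∈ supp β, β k) :
    α = β ∨ α = -β := by
  obtain ⟨a, b, hab, hα'⟩ := exists_supp_eq_pair hα
  have hβ' : supp β = {a, b} := hsupp ▸ hα'
  have ha : a ∈ supp α := by simp [hα']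
  have hb : b ∈ supp α := by simp [hα']
  rw [hα', hβ', prod_pair hab, prod_pair hab] at hprod
  rw [eq_pairVec_of_supp_eq hab hα', eq_pairVec_of_supp_eq hab hβ']
  rcases IsSign.eq_and_eq_or_eq_neg_and_eq_neg_of_mul_eq (isSign_apply_of_mem_supp hα ha)
    (isSign_apply_of_mem_supp hα hb) (isSign_apply_of_mem_supp hβ (hsupp ▸ ha))
    (isSign_apply_of_mem_supp hβ (hsupp ▸ hb)) hprod with ⟨h1, h2⟩ | ⟨h1, h2⟩
  · left
    rw [h1, h2]
  · right
    rw [h1, h2, pairVec_neg]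

lemma card_filter_supp_eq_le_two {F : Finset (EuclideanSpace ℝ (Fin n))}
    (hF : IsStronglyOrthSubset (rootsD n) F) (u : Finset (Fin n)) :
    #{α ∈ F | supp α = u} ≤ 2 := by
  have hmem : ∀ α ∈ F.filter (supp · = u), α ∈ F ∧ α ∈ rootsD n ∧ supp α = u :=
    fun α hα => ⟨(mem_filter.1 hα).1, hF.1 (mem_filter.1 hα).1, (mem_filter.1 hα).2⟩
  calc #{α ∈ F | supp α = u}
      ≤ #({1, -1} : Finset ℝ) := by
        refine card_le_card_of_injOn (fun α => ∏ k ∈ supp α, α k) (fun α hα => ?_)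
          fun α hα β hβ hprod => ?_
        · simpa [IsSign] using isSign_prod_supp (hmem α hα).2.1
        · obtain ⟨hαF, hα, hαu⟩ := hmem α hα
          obtain ⟨hβF, hβ, hβu⟩ := hmem β hβ
          by_contra hne
          exact (hF.2 hαF hβF hne).1 <|
            (eq_or_eq_neg_of_supp_eq hα hβ (hαu.trans hβu.symm) hprod).resolve_left hne
    _ = 2 := card_pair (by norm_num)

lemma mul_card_le_card_of_pairwiseDisjoint {ι : Type*} [Fintype ι] [DecidableEq ι] {k : ℕ}
    {T : Finset (Finset ι)} (hcard : ∀ u ∈ T, #u = k)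
    (hdisj : (T : Set (Finset ι)).PairwiseDisjoint id) : k * #T ≤ Fintype.card ι :=
  calc k * #T = ∑ u ∈ T, #u := by rw [sum_congr rfl hcard, sum_const, smul_eq_mul, mul_comm]
    _ = #(T.biUnion id) := (card_biUnion hdisj).symm
    _ ≤ Fintype.card ι := card_le_univ _

theorem card_le_of_isStronglyOrthSubset {F : Finset (EuclideanSpace ℝ (Fin n))}
    (hF : IsStronglyOrthSubset (rootsD n) F) : #F ≤ 2 * (n / 2) := by
  have hfibers : #F ≤ 2 * #(F.image supp) :=
    card_le_mul_card_image F 2 fun u _ => card_filter_supp_eq_le_two hF u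
  have hcard : ∀ u ∈ F.image supp, #u = 2 := by
    simp only [mem_image, forall_exists_index, and_imp, forall_apply_eq_imp_iff₂]
    exact fun α hα => card_supp_of_mem_rootsD (hF.1 hα)
  have hdisj : (F.image supp : Set (Finset (Fin n))).PairwiseDisjoint id := by
    rw [coe_image]
    rintro _ ⟨α, hα, rfl⟩ _ ⟨β, hβ, rfl⟩ hne
    have hαβ : α ≠ β := by
      rintro rfl
      exact hne rfl
    exact (supp_eq_or_disjoint_of_stronglyOrth (hF.1 hα) (hF.1 hβ)
      (hF.2 hα hβ hαβ)).resolve_left hne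
  have hsupps := mul_card_le_card_of_pairwiseDisjoint hcard hdisj
  rw [Fintype.card_fin] at hsupps
  omega

theorem ncard_le_of_isStronglyOrthSubset {S : Set (EuclideanSpace ℝ (Fin n))}
    (hS : IsStronglyOrthSubset (rootsD n) S) : S.ncard ≤ 2 * (n / 2) := by
  rcases S.finite_or_infinite with hfin | hinf
  · obtain ⟨F, rfl⟩ := hfin.exists_finset_coe
    rw [Set.ncard_coe_finset]
    exact card_le_of_isStronglyOrthSubset hS
  · simp [hinf.ncard]

noncomputable def gammaVec (h : Fin (n / 2)) (b : Bool) : EuclideanSpace ℝ (Fin n) :=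
  pairVec ⟨2 * h, by omega⟩ ⟨2 * h + 1, by omega⟩ 1 (if b then 1 else -1)

lemma isSign_ite (b : Bool) : IsSign (if b then 1 else -1) := by
  cases b <;> simp [IsSign]

lemma gammaVec_mem_rootsD (h : Fin (n / 2)) (b : Bool) : gammaVec h b ∈ rootsD n :=
  pairVec_mem_rootsD (by simp [Fin.ext_iff]) (Or.inl rfl) (isSign_ite b)

lemma isStronglyOrthSubset_range_gammaVec :
    IsStronglyOrthSubset (rootsD n) (Set.range (Function.uncurry (gammaVec (n := n)))) := by
  refine ⟨Set.range_subset_iff.2 fun p => gammaVec_mem_rootsD p.1 p.2, ?_⟩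
  rintro _ ⟨⟨h, b⟩, rfl⟩ _ ⟨⟨h', b'⟩, rfl⟩ hne
  rcases eq_or_ne h h' with rfl | hh
  · obtain rfl : b' = !b := by cases b <;> cases b' <;> simp_all
    have hflip : (if !b then (1 : ℝ) else -1) = -(if b then 1 else -1) := by cases b <;> simp
    simp only [Function.uncurry_apply_pair, gammaVec, hflip]
    exact stronglyOrth_pairVec_pairVec_neg (by simp [Fin.ext_iff]) (Or.inl rfl) (isSign_ite b)
  · refine stronglyOrth_of_disjoint_supp (gammaVec_mem_rootsD h b)
      (gammaVec_mem_rootsD h' b') ?_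
    rw [Function.uncurry_apply_pair, Function.uncurry_apply_pair, gammaVec, gammaVec,
      supp_pairVec (by simp [Fin.ext_iff]) one_ne_zero (isSign_ite b).ne_zero,
      supp_pairVec (by simp [Fin.ext_iff]) one_ne_zero (isSign_ite b').ne_zero]
    simp only [Fin.ext_iff, ne_eq] at hh
    simp [Fin.ext_iff]
    omega

lemma gammaVec_injective : Function.Injective (Function.uncurry (gammaVec (n := n))) := by
  rintro ⟨h, b⟩ ⟨h', b'⟩ heq
  simp only [Function.uncurry_apply_pair, gammaVec] at heq
  obtain rfl : h = h' := by
    have h2h := congrArg (· ⟨2 * h, by omega⟩) heq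
    simp only [pairVec_apply, Fin.ext_iff] at h2h
    split_ifs at h2h <;> first | omega | norm_num at h2h
  have h2h1 := congrArg (· ⟨2 * h + 1, by omega⟩) heq
  simp only [pairVec_apply, Fin.ext_iff] at h2h1
  cases b <;> cases b' <;> norm_num at h2h1 <;> rfl

lemma ncard_range_gammaVec :
    (Set.range (Function.uncurry (gammaVec (n := n)))).ncard = 2 * (n / 2) := by
  rw [Set.ncard_range_of_injective gammaVec_injective]
  simp [mul_comm]

lemma stdVec_eq_single {i : ℕ} (k : Fin n) (hk : (k : ℕ) + 1 = i) :
    stdVec n i = single k 1 := by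
  subst hk
  ext j
  simp [stdVec, Fin.ext_iff]

lemma exists_isSign_eq_pairVec_iff (a b : Fin n) (x : EuclideanSpace ℝ (Fin n)) :
    (∃ s t, IsSign s ∧ IsSign t ∧ x = pairVec a b s t) ↔
      x = single a 1 + single b 1 ∨ x = single a 1 - single b 1 ∨
        x = -single a 1 + single b 1 ∨ x = -single a 1 - single b 1 := by
  constructor
  · rintro ⟨s, t, rfl | rfl, rfl | rfl, rfl⟩ <;> simp [pairVec, sub_eq_add_neg]
  · rintro (rfl | rfl | rfl | rfl)
    exacts [⟨1, 1, by simp [IsSign, pairVec]⟩,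
      ⟨1, -1, by simp [IsSign, pairVec, sub_eq_add_neg]⟩,
      ⟨-1, 1, by simp [IsSign, pairVec]⟩,
      ⟨-1, -1, by simp [IsSign, pairVec, sub_eq_add_neg]⟩]

lemma setOf_stdVec_eq_rootsD :
    {x | ∃ i j : ℕ, 1 ≤ i ∧ i < j ∧ j ≤ n ∧
      (x = stdVec n i + stdVec n j ∨ x = stdVec n i - stdVec n j ∨
        x = -stdVec n i + stdVec n j ∨ x = -stdVec n i - stdVec n j)} = rootsD n := by
  ext x
  constructor
  · rintro ⟨i, j, hi, hij, hj, hx⟩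
    rw [stdVec_eq_single ⟨i - 1, by omega⟩ (by simp; omega),
      stdVec_eq_single ⟨j - 1, by omega⟩ (by simp; omega)] at hx
    exact ⟨_, _, by simp [Fin.ext_iff]; omega, (exists_isSign_eq_pairVec_iff _ _ x).2 hx⟩
  · rintro ⟨a, b, hab, s, t, hs, ht, rfl⟩
    wlog hlt : a < b generalizing a b s t
    · rw [pairVec_comm]
      exact this b a hab.symm t s ht hs (hab.symm.lt_of_le (not_lt.1 hlt))
    refine ⟨a + 1, b + 1, by omega, by simpa using hlt, by omega, ?_⟩
    rw [stdVec_eq_single a rfl, stdVec_eq_single b rfl]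
    exact (exists_isSign_eq_pairVec_iff a b _).1 ⟨s, t, hs, ht, rfl⟩

lemma setOf_stdVec_eq_range_gammaVec :
    {x | ∃ h : ℕ, 1 ≤ h ∧ h ≤ n / 2 ∧
      (x = stdVec n (2 * h - 1) - stdVec n (2 * h) ∨
        x = stdVec n (2 * h - 1) + stdVec n (2 * h))} =
      Set.range (Function.uncurry (gammaVec (n := n))) := by
  ext x
  constructor
  · rintro ⟨h, h1, h2, hx⟩
    rw [stdVec_eq_single ⟨2 * (h - 1), by omega⟩ (by simp; omega),
      stdVec_eq_single ⟨2 * (h - 1) + 1, by omega⟩ (by simp; omega)] at hx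
    rcases hx with rfl | rfl
    · exact ⟨(⟨h - 1, by omega⟩, false), by simp [gammaVec, pairVec, sub_eq_add_neg]⟩
    · exact ⟨(⟨h - 1, by omega⟩, true), by simp [gammaVec, pairVec]⟩
  · rintro ⟨⟨k, b⟩, rfl⟩
    refine ⟨k + 1, by omega, by omega, ?_⟩
    rw [stdVec_eq_single ⟨2 * k, by omega⟩ (by simp; omega),
      stdVec_eq_single ⟨2 * k + 1, by omega⟩ (by simp; omega)]
    cases b <;> simp [gammaVec, pairVec, sub_eq_add_neg]

end RootSystemD

theorem typeD_max_strongly_orthogonal_general (l : ℕ)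
    (R : Set (EuclideanSpace ℝ (Fin l)))
    (hR : R = {x | ∃ i j : ℕ, 1 ≤ i ∧ i < j ∧ j ≤ l ∧
        (x = stdVec l i + stdVec l j ∨ x = stdVec l i - stdVec l j ∨
         x = -stdVec l i + stdVec l j ∨ x = -stdVec l i - stdVec l j)})
    (Γ : Set (EuclideanSpace ℝ (Fin l)))
    (hΓ : Γ = {x | ∃ h : ℕ, 1 ≤ h ∧ h ≤ l / 2 ∧
        (x = stdVec l (2 * h - 1) - stdVec l (2 * h) ∨
         x = stdVec l (2 * h - 1) + stdVec l (2 * h))}) :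
    IsStronglyOrthSubset R Γ ∧ Γ.ncard = 2 * (l / 2) ∧
      (∀ S : Set (EuclideanSpace ℝ (Fin l)),
        IsStronglyOrthSubset R S → S.ncard ≤ 2 * (l / 2)) ∧
      (Odd l → ∀ S : Set (EuclideanSpace ℝ (Fin l)),
        IsStronglyOrthSubset R S → S.ncard ≠ l) := by
  rw [RootSystemD.setOf_stdVec_eq_rootsD] at hR
  rw [RootSystemD.setOf_stdVec_eq_range_gammaVec] at hΓ
  subst hR hΓ
  have hbound S (hS : IsStronglyOrthSubset (RootSystemD.rootsD l) S) :=
    RootSystemD.ncard_le_of_isStronglyOrthSubset hS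
  refine ⟨RootSystemD.isStronglyOrthSubset_range_gammaVec, RootSystemD.ncard_range_gammaVec,
    hbound, ?_⟩
  rintro ⟨k, rfl⟩ S hS hcard
  have := hbound S hS
  omega

/-- In the root system of type `D_ℓ`, the set
`Γ = {e_{2h−1} ± e_{2h} : 1 ≤ h ≤ ⌊ℓ/2⌋}` is a strongly orthogonal subset with
`2⌊ℓ/2⌋` elements, every strongly orthogonal subset has at most `2⌊ℓ/2⌋`
elements, and in particular when `ℓ` is odd no strongly orthogonal subset has
`ℓ` elements. -/
theorem typeD_max_strongly_orthogonal (l : ℕ) (hl : 2 ≤ l)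
    (R : Set (EuclideanSpace ℝ (Fin l)))
    (hR : R = {x | ∃ i j : ℕ, 1 ≤ i ∧ i < j ∧ j ≤ l ∧
        (x = stdVec l i + stdVec l j ∨ x = stdVec l i - stdVec l j ∨
         x = -stdVec l i + stdVec l j ∨ x = -stdVec l i - stdVec l j)})
    (Γ : Set (EuclideanSpace ℝ (Fin l)))
    (hΓ : Γ = {x | ∃ h : ℕ, 1 ≤ h ∧ h ≤ l / 2 ∧
        (x = stdVec l (2 * h - 1) - stdVec l (2 * h) ∨
         x = stdVec l (2 * h - 1) + stdVec l (2 * h))}) :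
    IsStronglyOrthSubset R Γ ∧ Γ.ncard = 2 * (l / 2) ∧
      (∀ S : Set (EuclideanSpace ℝ (Fin l)),
        IsStronglyOrthSubset R S → S.ncard ≤ 2 * (l / 2)) ∧
      (Odd l → ∀ S : Set (EuclideanSpace ℝ (Fin l)),
        IsStronglyOrthSubset R S → S.ncard ≠ l) :=
  typeD_max_strongly_orthogonal_general l R hR Γ hΓ
end

section
/- Let R = {±e_i : 1 ≤ i ≤ 4} ∪ {±e_i ± e_j : 1 ≤ i < j ≤ 4} ∪ {(±e₁ ± e₂ ± e₃ ± e₄)/2} ⊂ ℝ⁴ be the root system of type F₄. Then Γ = {e₁ − e₂, e₁ + e₂, e₃ − e₄, e₃ + e₄} is a strongly orthogonal subset of R with 4 elements, and every strongly orthogonal subset of R has at most 4 elements. -/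
/-- The root system of type `F₄` in `ℝ⁴`: the vectors `±e_i`, the vectors
`±e_i ± e_j` for `i < j`, and the 16 vectors `(±e₁ ± e₂ ± e₃ ± e₄)/2`. -/
noncomputable def rootsF4 : Set (EuclideanSpace ℝ (Fin 4)) :=
  {x | ∃ i : ℕ, 1 ≤ i ∧ i ≤ 4 ∧ (x = stdVec 4 i ∨ x = -stdVec 4 i)} ∪
  {x | ∃ i j : ℕ, 1 ≤ i ∧ i < j ∧ j ≤ 4 ∧
      (x = stdVec 4 i + stdVec 4 j ∨ x = stdVec 4 i - stdVec 4 j ∨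
       x = -stdVec 4 i + stdVec 4 j ∨ x = -stdVec 4 i - stdVec 4 j)} ∪
  {x | ∀ i : Fin 4, x i = 1 / 2 ∨ x i = -(1 / 2)}

/-!
If two roots `α ≠ ±β` of `F₄` are not orthogonal, then `α + β` or `α - β` is again a root.
Hence the elements of a strongly orthogonal subset are pairwise orthogonal and nonzero,
so they are linearly independent and there are at most `dim ℝ⁴ = 4` of them.
The finitely many facts needed about `F₄` are checked by computation on the
integer vectors `2α`.
-/

open Module

section StronglyOrthogonal

variable {V W : Type*} [AddCommGroup V] [AddCommGroup W]

theorem isStronglyOrthSubset_image_iff {f : V →+ W} (hf : Function.Injective f) {R S : Set V} :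
    IsStronglyOrthSubset (f '' R) (f '' S) ↔ IsStronglyOrthSubset R S := by
  unfold IsStronglyOrthSubset
  rw [Set.image_subset_image_iff hf, hf.injOn.pairwise_image]
  unfold Function.onFun
  simp only [← map_neg, ← map_add, ← map_sub, hf.ne_iff, hf.mem_set_image]

variable {E : Type*} [NormedAddCommGroup E] [InnerProductSpace ℝ E] {R S : Set E}

theorem IsStronglyOrthSubset.pairwise_inner_eq_zero
    (hR : ∀ α ∈ R, ∀ β ∈ R, inner ℝ α β ≠ 0 → α = β ∨ α = -β ∨ α + β ∈ R ∨ α - β ∈ R)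
    (hS : IsStronglyOrthSubset R S) : S.Pairwise fun α β => inner ℝ α β = 0 := by
  intro α hα β hβ hne
  by_contra hinner
  obtain ⟨hneg, hadd, hsub⟩ := hS.2 hα hβ hne
  rcases hR α (hS.1 hα) β (hS.1 hβ) hinner with h | h | h | h <;> contradiction

theorem IsStronglyOrthSubset.linearIndependent (h0 : (0 : E) ∉ R)
    (hR : ∀ α ∈ R, ∀ β ∈ R, inner ℝ α β ≠ 0 → α = β ∨ α = -β ∨ α + β ∈ R ∨ α - β ∈ R)
    (hS : IsStronglyOrthSubset R S) : LinearIndependent ℝ ((↑) : S → E) :=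
  linearIndependent_of_ne_zero_of_inner_eq_zero (fun α hα => h0 (hα ▸ hS.1 α.2))
    fun α β hne => hS.pairwise_inner_eq_zero hR α.2 β.2 (Subtype.coe_ne_coe.2 hne)

theorem IsStronglyOrthSubset.ncard_le_finrank [FiniteDimensional ℝ E] (h0 : (0 : E) ∉ R)
    (hR : ∀ α ∈ R, ∀ β ∈ R, inner ℝ α β ≠ 0 → α = β ∨ α = -β ∨ α + β ∈ R ∨ α - β ∈ R)
    (hS : IsStronglyOrthSubset R S) : S.ncard ≤ finrank ℝ E := by
  have hli := hS.linearIndependent h0 hR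
  lift S to Finset E using hli.setFinite
  rw [Set.ncard_coe_finset]
  exact hli.finset_card_le_finrank

end StronglyOrthogonal

namespace F4

def twiceStdVec (i : ℕ) : Fin 4 → ℤ := fun k => if (k : ℕ) + 1 = i then 2 else 0

noncomputable def halve : (Fin 4 → ℤ) →+ EuclideanSpace ℝ (Fin 4) where
  toFun v := WithLp.toLp 2 fun k => (v k : ℝ) / 2
  map_zero' := by ext; simp
  map_add' v w := by ext; simp [add_div]

theorem halve_apply (v : Fin 4 → ℤ) (k : Fin 4) : halve v k = (v k : ℝ) / 2 := rfl

theorem halve_injective : Function.Injective halve := by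
  intro v w h
  funext k
  simpa [halve_apply] using congrArg (· k) h

theorem inner_halve (v w : Fin 4 → ℤ) :
    inner ℝ (halve v) (halve w) = ((v ⬝ᵥ w : ℤ) : ℝ) / 4 := by
  simp only [PiLp.inner_apply, RCLike.inner_apply, conj_trivial, halve_apply, dotProduct,
    Fin.sum_univ_four]
  push_cast
  ring

theorem stdVec_eq_halve (i : ℕ) : stdVec 4 i = halve (twiceStdVec i) := by
  ext k
  by_cases h : (k : ℕ) + 1 = i <;> simp [stdVec, halve_apply, twiceStdVec, h]

/-- `F₄` consists of the vectors of squared length `1` or `2` in `ℤ⁴ ∪ (ℤ + 1/2)⁴`;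
this predicate describes their doubles. -/
def IsDoubledRoot (v : Fin 4 → ℤ) : Prop :=
  ((∀ k, Even (v k)) ∨ ∀ k, Odd (v k)) ∧ (v ⬝ᵥ v = 4 ∨ v ⬝ᵥ v = 8)

instance : DecidablePred IsDoubledRoot := fun v => by
  unfold IsDoubledRoot
  infer_instance

def doubledRoots : Finset (Fin 4 → ℤ) :=
  (Fintype.piFinset fun _ => {-2, -1, 0, 1, 2}).filter IsDoubledRoot

theorem IsDoubledRoot.mem_doubledRoots {v : Fin 4 → ℤ} (hv : IsDoubledRoot v) :
    v ∈ doubledRoots := by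
  refine Finset.mem_filter.2 ⟨Fintype.mem_piFinset.2 fun k => ?_, hv⟩
  have hk : v k * v k ≤ v ⬝ᵥ v :=
    Finset.single_le_sum (f := fun i => v i * v i) (fun i _ => mul_self_nonneg (v i))
      (Finset.mem_univ k)
  have : -2 ≤ v k ∧ v k ≤ 2 := by constructor <;> rcases hv.2 with h | h <;> nlinarith
  simp only [Finset.mem_insert, Finset.mem_singleton]
  omega

theorem IsDoubledRoot.add_or_sub_of_dotProduct_ne_zero {a b : Fin 4 → ℤ}
    (ha : IsDoubledRoot a) (hb : IsDoubledRoot b) (hab : a ⬝ᵥ b ≠ 0) :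
    a = b ∨ a = -b ∨ IsDoubledRoot (a + b) ∨ IsDoubledRoot (a - b) := by
  have key : ∀ a ∈ doubledRoots, ∀ b ∈ doubledRoots, a ⬝ᵥ b ≠ 0 →
      a = b ∨ a = -b ∨ IsDoubledRoot (a + b) ∨ IsDoubledRoot (a - b) := by
    decide +kernel
  exact key a ha.mem_doubledRoots b hb.mem_doubledRoots hab

def IsRootShape (v : Fin 4 → ℤ) : Prop :=
  (∃ i ∈ Finset.Icc 1 4, v = twiceStdVec i ∨ v = -twiceStdVec i) ∨
  (∃ i ∈ Finset.Icc 1 4, ∃ j ∈ Finset.Ioc i 4,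
    v = twiceStdVec i + twiceStdVec j ∨ v = twiceStdVec i - twiceStdVec j ∨
    v = -twiceStdVec i + twiceStdVec j ∨ v = -twiceStdVec i - twiceStdVec j) ∨
  ∀ k, v k = 1 ∨ v k = -1

instance : DecidablePred IsRootShape := fun v => by
  unfold IsRootShape
  infer_instance

theorem rootsF4_subset_range_halve : rootsF4 ⊆ Set.range halve := by
  simp only [rootsF4, stdVec_eq_halve, ← map_neg, ← map_add, ← map_sub]
  rintro x ((⟨i, -, -, rfl | rfl⟩ | ⟨i, j, -, -, -, rfl | rfl | rfl | rfl⟩) | hx)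
  any_goals exact Set.mem_range_self _
  have hcoord (k : Fin 4) : ∃ n : ℤ, (n : ℝ) / 2 = x k := by
    rcases hx k with h | h
    exacts [⟨1, by rw [h]; norm_num⟩, ⟨-1, by rw [h]; norm_num⟩]
  choose v hv using hcoord
  exact ⟨v, by ext k; exact hv k⟩

theorem halve_mem_rootsF4_iff_isRootShape {v : Fin 4 → ℤ} :
    halve v ∈ rootsF4 ↔ IsRootShape v := by
  have hhalf (n : ℤ) : ((n : ℝ) / 2 = 1 / 2 ∨ (n : ℝ) / 2 = -(1 / 2)) ↔ (n = 1 ∨ n = -1) := by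
    rw [← neg_div, div_left_inj' two_ne_zero, div_left_inj' two_ne_zero]
    norm_cast
  simp only [rootsF4, IsRootShape, stdVec_eq_halve, ← map_neg, ← map_add, ← map_sub,
    Set.mem_union, Set.mem_ofPred_eq, halve_injective.eq_iff, Finset.mem_Icc, Finset.mem_Ioc,
    halve_apply, hhalf]
  constructor
  · rintro ((⟨i, h1, h4, h⟩ | ⟨i, j, h1, hij, h4, h⟩) | h)
    exacts [Or.inl ⟨i, ⟨h1, h4⟩, h⟩, Or.inr (Or.inl ⟨i, ⟨h1, by omega⟩, j, ⟨hij, h4⟩, h⟩),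
      Or.inr (Or.inr h)]
  · rintro (⟨i, ⟨h1, h4⟩, h⟩ | ⟨i, ⟨h1, -⟩, j, ⟨hij, h4⟩, h⟩ | h)
    exacts [Or.inl (Or.inl ⟨i, h1, h4, h⟩), Or.inl (Or.inr ⟨i, j, h1, hij, h4, h⟩), Or.inr h]

theorem IsRootShape.isDoubledRoot {v : Fin 4 → ℤ} (hv : IsRootShape v) : IsDoubledRoot v := by
  have hshort : ∀ i ∈ Finset.Icc 1 4,
      IsDoubledRoot (twiceStdVec i) ∧ IsDoubledRoot (-twiceStdVec i) := by
    decide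
  have hlong : ∀ i ∈ Finset.Icc 1 4, ∀ j ∈ Finset.Ioc i 4,
      IsDoubledRoot (twiceStdVec i + twiceStdVec j) ∧
      IsDoubledRoot (twiceStdVec i - twiceStdVec j) ∧
      IsDoubledRoot (-twiceStdVec i + twiceStdVec j) ∧
      IsDoubledRoot (-twiceStdVec i - twiceStdVec j) := by
    decide
  have hhalf : ∀ v ∈ Fintype.piFinset fun _ => {1, -1}, IsDoubledRoot v := by
    decide
  rcases hv with ⟨i, hi, rfl | rfl⟩ | ⟨i, hi, j, hj, rfl | rfl | rfl | rfl⟩ | hv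
  · exact (hshort i hi).1
  · exact (hshort i hi).2
  · exact (hlong i hi j hj).1
  · exact (hlong i hi j hj).2.1
  · exact (hlong i hi j hj).2.2.1
  · exact (hlong i hi j hj).2.2.2
  · exact hhalf v (Fintype.mem_piFinset.2 fun k => by simpa using hv k)

theorem IsDoubledRoot.isRootShape {v : Fin 4 → ℤ} (hv : IsDoubledRoot v) : IsRootShape v := by
  have key : ∀ v ∈ doubledRoots, IsRootShape v := by decide +kernel
  exact key v hv.mem_doubledRoots

theorem rootsF4_eq_image : rootsF4 = halve '' {v | IsDoubledRoot v} := by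
  ext x
  constructor
  · intro hx
    obtain ⟨v, rfl⟩ := rootsF4_subset_range_halve hx
    exact ⟨v, (halve_mem_rootsF4_iff_isRootShape.1 hx).isDoubledRoot, rfl⟩
  · rintro ⟨v, hv, rfl⟩
    exact halve_mem_rootsF4_iff_isRootShape.2 hv.isRootShape

theorem halve_mem_rootsF4 {v : Fin 4 → ℤ} : halve v ∈ rootsF4 ↔ IsDoubledRoot v := by
  rw [rootsF4_eq_image, halve_injective.mem_set_image]
  rfl

def doubledGamma : Finset (Fin 4 → ℤ) :=
  {twiceStdVec 1 - twiceStdVec 2, twiceStdVec 1 + twiceStdVec 2,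
    twiceStdVec 3 - twiceStdVec 4, twiceStdVec 3 + twiceStdVec 4}

theorem isStronglyOrthSubset_doubledGamma :
    IsStronglyOrthSubset {v | IsDoubledRoot v} ↑doubledGamma := by
  have key : (∀ a ∈ doubledGamma, IsDoubledRoot a) ∧
      ∀ a ∈ doubledGamma, ∀ b ∈ doubledGamma, a ≠ b →
        a ≠ -b ∧ ¬IsDoubledRoot (a + b) ∧ ¬IsDoubledRoot (a - b) := by
    decide
  exact key

end F4

theorem zero_notMem_rootsF4 : (0 : EuclideanSpace ℝ (Fin 4)) ∉ rootsF4 := by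
  rw [← map_zero F4.halve, F4.halve_mem_rootsF4]
  decide

theorem rootsF4_add_or_sub_mem_of_inner_ne_zero :
    ∀ α ∈ rootsF4, ∀ β ∈ rootsF4, inner ℝ α β ≠ 0 →
      α = β ∨ α = -β ∨ α + β ∈ rootsF4 ∨ α - β ∈ rootsF4 := by
  rw [F4.rootsF4_eq_image]
  rintro _ ⟨a, ha, rfl⟩ _ ⟨b, hb, rfl⟩ hinner
  have hab : a ⬝ᵥ b ≠ 0 := by
    intro h
    simp [F4.inner_halve, h] at hinner
  rcases ha.add_or_sub_of_dotProduct_ne_zero hb hab with rfl | rfl | h | h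
  · exact Or.inl rfl
  · exact Or.inr (Or.inl (map_neg _ _))
  · exact Or.inr (Or.inr (Or.inl ⟨a + b, h, map_add _ _ _⟩))
  · exact Or.inr (Or.inr (Or.inr ⟨a - b, h, map_sub _ _ _⟩))

/-- `Γ = {e₁ − e₂, e₁ + e₂, e₃ − e₄, e₃ + e₄}` is a strongly
orthogonal subset of the root system of type `F₄` with `4` elements, and every
strongly orthogonal subset has at most `4` elements. -/
theorem typeF4_max_strongly_orthogonal
    (Γ : Set (EuclideanSpace ℝ (Fin 4)))
    (hΓ : Γ = {stdVec 4 1 - stdVec 4 2, stdVec 4 1 + stdVec 4 2,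
               stdVec 4 3 - stdVec 4 4, stdVec 4 3 + stdVec 4 4}) :
    IsStronglyOrthSubset rootsF4 Γ ∧ Γ.ncard = 4 ∧
      ∀ S : Set (EuclideanSpace ℝ (Fin 4)),
        IsStronglyOrthSubset rootsF4 S → S.ncard ≤ 4 := by
  have hΓ' : Γ = F4.halve '' ↑F4.doubledGamma := by
    simp only [hΓ, F4.stdVec_eq_halve, ← map_sub, ← map_add, F4.doubledGamma, Finset.coe_insert,
      Finset.coe_singleton, Set.image_insert_eq, Set.image_singleton]
  refine ⟨?_, ?_, fun S hS => ?_⟩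
  · rw [hΓ', F4.rootsF4_eq_image, isStronglyOrthSubset_image_iff F4.halve_injective]
    exact F4.isStronglyOrthSubset_doubledGamma
  · rw [hΓ', Set.ncard_image_of_injective _ F4.halve_injective, Set.ncard_coe_finset]
    decide
  · simpa using hS.ncard_le_finrank zero_notMem_rootsF4 rootsF4_add_or_sub_mem_of_inner_ne_zero
end

section
/- Let R(E₈) = {±e_i ± e_j : 1 ≤ i < j ≤ 8} ∪ {(1/2)∑_{i=1}^{8} ε_i e_i : ε_i ∈ {±1}, ∏_{i=1}^{8} ε_i = 1} ⊂ ℝ⁸, and let R(E₇) = {α ∈ R(E₈) : ⟨α, e₇ + e₈⟩ = 0}. Then the four vectors (1/2)(e₁ − e₂ − e₃ − e₄ − e₅ − e₆ − e₇ + e₈), (1/2)(−e₁ + e₂ + e₃ + e₄ − e₅ − e₆ − e₇ + e₈), (1/2)(−e₁ + e₂ − e₃ − e₄ + e₅ + e₆ − e₇ + e₈), and (1/2)(e₁ − e₂ + e₃ + e₄ + e₅ + e₆ − e₇ + e₈) all belong to R(E₇) and form a strongly orthogonal subset of R(E₇) with 4 elements. -/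
open RealInnerProductSpace

/-- The root system of type `E₈` in `ℝ⁸`. -/
noncomputable def rootsE8 : Set (EuclideanSpace ℝ (Fin 8)) :=
  {x | ∃ i j : ℕ, 1 ≤ i ∧ i < j ∧ j ≤ 8 ∧
      (x = stdVec 8 i + stdVec 8 j ∨ x = stdVec 8 i - stdVec 8 j ∨
       x = -stdVec 8 i + stdVec 8 j ∨ x = -stdVec 8 i - stdVec 8 j)} ∪
  {x | (∀ i : Fin 8, x i = 1 / 2 ∨ x i = -(1 / 2)) ∧
      Even (Finset.univ.filter fun i : Fin 8 => x i = -(1 / 2)).card}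

/-- The root system of type `E₇`, realized inside `R(E₈)` as the roots
orthogonal to `e₇ + e₈`. -/
noncomputable def rootsE7 : Set (EuclideanSpace ℝ (Fin 8)) :=
  {α ∈ rootsE8 | ⟪α, stdVec 8 7 + stdVec 8 8⟫ = 0}

/-!
Every root of `E₈` has squared length `2`. Hence if `α, β` are orthogonal roots, then
`‖α ± β‖² = 4`, so neither `α + β` nor `α - β` is a root, and `α ≠ -β`: a pairwise orthogonal set
of roots is strongly orthogonal. For the four given vectors `½ ∑ εᵢ eᵢ`, membership in `R(E₇)`
and pairwise orthogonality are finite checks on the integer sign patterns `ε`.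
-/

open Finset

section StrongOrthogonality

variable {E : Type*} [NormedAddCommGroup E] [InnerProductSpace ℝ E]

theorem isStronglyOrthSubset_of_pairwise_inner_eq_zero {R S : Set E} {c : ℝ}
    (hR : ∀ x ∈ R, ‖x‖ ^ 2 = c) (hc : c ≠ 0) (hSR : S ⊆ R)
    (hS : S.Pairwise fun α β => ⟪α, β⟫ = 0) : IsStronglyOrthSubset R S := by
  refine ⟨hSR, fun α hα β hβ hαβ => ?_⟩
  have hαβ : ⟪α, β⟫ = 0 := hS hα hβ hαβ
  have hα' := hR α (hSR hα)
  have hβ' := hR β (hSR hβ)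
  refine ⟨?_, fun h => ?_, fun h => ?_⟩
  · rintro rfl
    rw [inner_neg_left, real_inner_self_eq_norm_sq, hβ'] at hαβ
    exact hc (neg_eq_zero.mp hαβ)
  · have := hR _ h
    rw [norm_add_sq_real, hαβ, hα', hβ'] at this
    exact hc (by linarith)
  · have := hR _ h
    rw [norm_sub_sq_real, hαβ, hα', hβ'] at this
    exact hc (by linarith)

theorem isStronglyOrthSubset_range {ι : Type*} {R : Set E} {c : ℝ}
    (hR : ∀ x ∈ R, ‖x‖ ^ 2 = c) (hc : c ≠ 0) {v : ι → E} (hvR : ∀ a, v a ∈ R)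
    (hv : Pairwise fun a b => ⟪v a, v b⟫ = 0) : IsStronglyOrthSubset R (Set.range v) := by
  refine isStronglyOrthSubset_of_pairwise_inner_eq_zero hR hc (Set.range_subset_iff.mpr hvR) ?_
  rintro _ ⟨a, rfl⟩ _ ⟨b, rfl⟩ hab
  exact hv fun h => hab (congrArg v h)

end StrongOrthogonality

theorem stdVec_eq_single_s16 {n : ℕ} (k : Fin n) : stdVec n (k + 1) = EuclideanSpace.single k 1 := by
  ext j
  simp [stdVec, Fin.val_inj]

theorem inner_stdVec_of_ne {n i j : ℕ} (hij : i ≠ j) : ⟪stdVec n i, stdVec n j⟫ = 0 := by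
  refine Finset.sum_eq_zero fun k _ => ?_
  simp only [stdVec, WithLp.equiv_symm_apply, PiLp.toLp_apply]
  split_ifs <;> simp_all

theorem norm_stdVec {n i : ℕ} (h1 : 1 ≤ i) (hn : i ≤ n) : ‖stdVec n i‖ = 1 := by
  obtain ⟨k, rfl⟩ : ∃ k : Fin n, (k : ℕ) + 1 = i := ⟨⟨i - 1, by omega⟩, Nat.sub_add_cancel h1⟩
  simp [stdVec_eq_single_s16]

theorem norm_sq_of_mem_rootsE8 {x : EuclideanSpace ℝ (Fin 8)} (hx : x ∈ rootsE8) : ‖x‖ ^ 2 = 2 := by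
  rcases hx with ⟨i, j, hi, hij, hj, hx⟩ | ⟨hx, -⟩
  · have hi' := norm_stdVec hi (hij.trans_le hj).le
    have hj' := norm_stdVec (hi.trans hij.le) hj
    have hij' := inner_stdVec_of_ne (n := 8) hij.ne
    rcases hx with rfl | rfl | rfl | rfl <;>
      norm_num [norm_add_sq_real, norm_sub_sq_real, hi', hj', hij']
  · have hsq : ∀ k, x k ^ 2 = 1 / 4 := fun k => by rcases hx k with h | h <;> rw [h] <;> norm_num
    simp only [EuclideanSpace.real_norm_sq_eq, hsq, Finset.sum_const, Finset.card_univ,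
      Fintype.card_fin]
    norm_num

noncomputable def halfVec {n : ℕ} (ε : Fin n → ℤ) : EuclideanSpace ℝ (Fin n) :=
  WithLp.toLp 2 fun i => (ε i : ℝ) / 2

theorem halfVec_injective {n : ℕ} : Function.Injective (halfVec (n := n)) := by
  intro ε δ h
  funext i
  have := congrArg (· i) h
  simpa [halfVec] using this

theorem inner_halfVec {n : ℕ} (ε δ : Fin n → ℤ) :
    ⟪halfVec ε, halfVec δ⟫ = ((ε ⬝ᵥ δ : ℤ) : ℝ) / 4 := by
  simp only [halfVec, PiLp.inner_apply, RCLike.inner_apply, conj_trivial, dotProduct]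
  push_cast
  rw [Finset.sum_div]
  refine Finset.sum_congr rfl fun i _ => ?_
  ring

theorem inner_halfVec_stdVec {n : ℕ} (ε : Fin n → ℤ) (k : Fin n) :
    ⟪halfVec ε, stdVec n (k + 1)⟫ = (ε k : ℝ) / 2 := by
  simp [stdVec_eq_single_s16, EuclideanSpace.inner_single_right, halfVec]

theorem halfVec_mem_rootsE8 {ε : Fin 8 → ℤ} (hε : ∀ i, ε i = 1 ∨ ε i = -1)
    (heven : Even #{i | ε i = -1}) : halfVec ε ∈ rootsE8 := by
  have hneg : ∀ i, (ε i : ℝ) / 2 = -(1 / 2) ↔ ε i = -1 := fun i => by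
    constructor <;> intro h
    · exact_mod_cast (by linarith : (ε i : ℝ) = -1)
    · rw [h]; norm_num
  refine Or.inr ⟨fun i => ?_, ?_⟩
  · rcases hε i with h | h <;> simp only [halfVec, PiLp.toLp_apply, h] <;> norm_num
  · simpa only [halfVec, PiLp.toLp_apply, hneg] using heven

theorem halfVec_mem_rootsE7 {ε : Fin 8 → ℤ} (hε : ∀ i, ε i = 1 ∨ ε i = -1)
    (heven : Even #{i | ε i = -1}) (hperp : ε 6 + ε 7 = 0) : halfVec ε ∈ rootsE7 := by
  refine ⟨halfVec_mem_rootsE8 hε heven, ?_⟩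
  change ⟪_, stdVec 8 ((6 : Fin 8) + 1) + stdVec 8 ((7 : Fin 8) + 1)⟫ = 0
  rw [inner_add_right, inner_halfVec_stdVec, inner_halfVec_stdVec, ← add_div, ← Int.cast_add,
    hperp, Int.cast_zero, zero_div]

theorem isStronglyOrthSubset_rootsE7_range_halfVec {ι : Type*} {Γ : ι → Fin 8 → ℤ}
    (hΓ : ∀ a, halfVec (Γ a) ∈ rootsE7) (horth : Pairwise fun a b => Γ a ⬝ᵥ Γ b = 0) :
    IsStronglyOrthSubset rootsE7 (Set.range (halfVec ∘ Γ)) :=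
  isStronglyOrthSubset_range (fun x hx => norm_sq_of_mem_rootsE8 hx.1) two_ne_zero hΓ
    fun a b hab => by simp [inner_halfVec, horth hab]

/-- Rows: the sign patterns of the roots `α₁, γ₄, γ₅, γ₆` of the paper. -/
def eviSigns : Fin 4 → Fin 8 → ℤ :=
  ![![1, -1, -1, -1, -1, -1, -1, 1],
    ![-1, 1, 1, 1, -1, -1, -1, 1],
    ![-1, 1, -1, -1, 1, 1, -1, 1],
    ![1, -1, 1, 1, 1, 1, -1, 1]]

theorem eviSigns_eq_one_or_neg_one : ∀ a i, eviSigns a i = 1 ∨ eviSigns a i = -1 := by decide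

theorem even_card_eviSigns_eq_neg_one : ∀ a, Even #{i | eviSigns a i = -1} := by decide

theorem eviSigns_six_add_seven : ∀ a, eviSigns a 6 + eviSigns a 7 = 0 := by decide

theorem eviSigns_pairwise_dotProduct : Pairwise fun a b => eviSigns a ⬝ᵥ eviSigns b = 0 := by
  unfold Pairwise; decide

theorem eviSigns_injective : Function.Injective eviSigns := by decide

theorem halfVec_eviSigns : halfVec ∘ eviSigns =
    ![(1 / 2 : ℝ) • (stdVec 8 1 - stdVec 8 2 - stdVec 8 3 - stdVec 8 4 -
        stdVec 8 5 - stdVec 8 6 - stdVec 8 7 + stdVec 8 8),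
      (1 / 2 : ℝ) • (-stdVec 8 1 + stdVec 8 2 + stdVec 8 3 + stdVec 8 4 -
        stdVec 8 5 - stdVec 8 6 - stdVec 8 7 + stdVec 8 8),
      (1 / 2 : ℝ) • (-stdVec 8 1 + stdVec 8 2 - stdVec 8 3 - stdVec 8 4 +
        stdVec 8 5 + stdVec 8 6 - stdVec 8 7 + stdVec 8 8),
      (1 / 2 : ℝ) • (stdVec 8 1 - stdVec 8 2 + stdVec 8 3 + stdVec 8 4 +
        stdVec 8 5 + stdVec 8 6 - stdVec 8 7 + stdVec 8 8)] := by
  funext a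
  ext i
  fin_cases a <;> fin_cases i <;> norm_num [halfVec, eviSigns, stdVec]

/-- the four half-sum vectors listed below all belong to `R(E₇)`
and form a strongly orthogonal subset of `R(E₇)` with `4` elements. -/
theorem typeEVI_strongly_orthogonal_system :
    (1 / 2 : ℝ) • (stdVec 8 1 - stdVec 8 2 - stdVec 8 3 - stdVec 8 4 -
      stdVec 8 5 - stdVec 8 6 - stdVec 8 7 + stdVec 8 8) ∈ rootsE7 ∧
    (1 / 2 : ℝ) • (-stdVec 8 1 + stdVec 8 2 + stdVec 8 3 + stdVec 8 4 -
      stdVec 8 5 - stdVec 8 6 - stdVec 8 7 + stdVec 8 8) ∈ rootsE7 ∧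
    (1 / 2 : ℝ) • (-stdVec 8 1 + stdVec 8 2 - stdVec 8 3 - stdVec 8 4 +
      stdVec 8 5 + stdVec 8 6 - stdVec 8 7 + stdVec 8 8) ∈ rootsE7 ∧
    (1 / 2 : ℝ) • (stdVec 8 1 - stdVec 8 2 + stdVec 8 3 + stdVec 8 4 +
      stdVec 8 5 + stdVec 8 6 - stdVec 8 7 + stdVec 8 8) ∈ rootsE7 ∧
    IsStronglyOrthSubset rootsE7
      {(1 / 2 : ℝ) • (stdVec 8 1 - stdVec 8 2 - stdVec 8 3 - stdVec 8 4 -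
         stdVec 8 5 - stdVec 8 6 - stdVec 8 7 + stdVec 8 8),
       (1 / 2 : ℝ) • (-stdVec 8 1 + stdVec 8 2 + stdVec 8 3 + stdVec 8 4 -
         stdVec 8 5 - stdVec 8 6 - stdVec 8 7 + stdVec 8 8),
       (1 / 2 : ℝ) • (-stdVec 8 1 + stdVec 8 2 - stdVec 8 3 - stdVec 8 4 +
         stdVec 8 5 + stdVec 8 6 - stdVec 8 7 + stdVec 8 8),
       (1 / 2 : ℝ) • (stdVec 8 1 - stdVec 8 2 + stdVec 8 3 + stdVec 8 4 +
         stdVec 8 5 + stdVec 8 6 - stdVec 8 7 + stdVec 8 8)} ∧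
    ({(1 / 2 : ℝ) • (stdVec 8 1 - stdVec 8 2 - stdVec 8 3 - stdVec 8 4 -
        stdVec 8 5 - stdVec 8 6 - stdVec 8 7 + stdVec 8 8),
      (1 / 2 : ℝ) • (-stdVec 8 1 + stdVec 8 2 + stdVec 8 3 + stdVec 8 4 -
        stdVec 8 5 - stdVec 8 6 - stdVec 8 7 + stdVec 8 8),
      (1 / 2 : ℝ) • (-stdVec 8 1 + stdVec 8 2 - stdVec 8 3 - stdVec 8 4 +
        stdVec 8 5 + stdVec 8 6 - stdVec 8 7 + stdVec 8 8),
      (1 / 2 : ℝ) • (stdVec 8 1 - stdVec 8 2 + stdVec 8 3 + stdVec 8 4 +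
        stdVec 8 5 + stdVec 8 6 - stdVec 8 7 + stdVec 8 8)} :
      Set (EuclideanSpace ℝ (Fin 8))).ncard = 4 := by
  have hroots : ∀ a, (halfVec ∘ eviSigns) a ∈ rootsE7 := fun a =>
    halfVec_mem_rootsE7 (eviSigns_eq_one_or_neg_one a) (even_card_eviSigns_eq_neg_one a)
      (eviSigns_six_add_seven a)
  have hsystem := isStronglyOrthSubset_rootsE7_range_halfVec hroots eviSigns_pairwise_dotProduct
  have hcard := Set.ncard_range_of_injective (halfVec_injective.comp eviSigns_injective)
  rw [halfVec_eviSigns] at hroots hsystem hcard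
  simp only [Matrix.range_cons, Matrix.range_empty, Set.union_empty, Set.singleton_union,
    Nat.card_eq_fintype_card, Fintype.card_fin] at hsystem hcard
  exact ⟨hroots 0, hroots 1, hroots 2, hroots 3, hsystem, hcard⟩
end
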